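/- arXiv:2311.04158 — 7 statements merged into one kernel-verified Lean document; each statement's English description precedes it below -/
import Mathlib

section
/- Let A ∈ ℝ^{n×d} have full column rank, with rows a_1,…,a_n. Then for every i ∈ {1,…,n}, the ℓ1 sensitivity σ_1(a_i) and the leverage score τ_i(A) satisfy √(τ_i(A)/n) ≤ σ_1(a_i) ≤ √(τ_i(A)). -/
/-!
Put `u = (AᵀA)⁻¹ aᵢ` and `v = A u`. Then `⟨aᵢ, x⟩ = ⟨v, A x⟩` for every `x`, and `τᵢ = ⟨aᵢ, u⟩ = ‖v‖₂²`.
Cauchy–Schwarz and `‖·‖₂ ≤ ‖·‖₁` bound `|⟨aᵢ, x⟩|` by `√τᵢ ‖A x‖₁`; conversely the test vector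
`x = u` has ratio `τᵢ / ‖v‖₁ ≥ τᵢ / (√n ‖v‖₂) = √(τᵢ / n)`.
-/

open Matrix BigOperators

/-- The ℓp sensitivity of a vector `a` with respect to a matrix `B`:
`σ_p^B(a) = sup { |⟨a,x⟩|^p / ‖Bx‖_p^p : x, Bx ≠ 0 }`. -/
noncomputable def sens (p : ℝ) {m d : ℕ} (B : Matrix (Fin m) (Fin d) ℝ)
    (a : Fin d → ℝ) : ℝ :=
  sSup {r : ℝ | ∃ x : Fin d → ℝ, B.mulVec x ≠ 0 ∧
    r = |a ⬝ᵥ x| ^ p / ∑ i, |B.mulVec x i| ^ p}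

/-- The leverage score of row `i` of a full-column-rank matrix `A`:
`τ_i(A) = a_iᵀ (AᵀA)⁻¹ a_i`. -/
noncomputable def leverageScore {n d : ℕ} (A : Matrix (Fin n) (Fin d) ℝ) (i : Fin n) : ℝ :=
  A i ⬝ᵥ ((Aᵀ * A)⁻¹).mulVec (A i)

section Sensitivity

variable {p c : ℝ} {m d : ℕ} {B : Matrix (Fin m) (Fin d) ℝ} {a : Fin d → ℝ}

lemma sum_abs_rpow_pos {ι : Type*} [Fintype ι] {w : ι → ℝ} (hw : w ≠ 0) (p : ℝ) :
    0 < ∑ i, |w i| ^ p := by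
  obtain ⟨k, hk⟩ := Function.ne_iff.1 hw
  exact Finset.sum_pos' (fun i _ => by positivity)
    ⟨k, Finset.mem_univ k, Real.rpow_pos_of_pos (abs_pos.2 hk) p⟩

lemma sens_nonneg (p : ℝ) (B : Matrix (Fin m) (Fin d) ℝ) (a : Fin d → ℝ) : 0 ≤ sens p B a := by
  refine Real.sSup_nonneg ?_
  rintro r ⟨x, -, rfl⟩
  positivity

lemma sens_le (hc : 0 ≤ c)
    (h : ∀ x, B *ᵥ x ≠ 0 → |a ⬝ᵥ x| ^ p ≤ c * ∑ i, |(B *ᵥ x) i| ^ p) : sens p B a ≤ c := by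
  refine Real.sSup_le ?_ hc
  rintro r ⟨x, hx, rfl⟩
  exact div_le_of_le_mul₀ (by positivity) hc (h x hx)

lemma le_sens (h : ∀ x, B *ᵥ x ≠ 0 → |a ⬝ᵥ x| ^ p ≤ c * ∑ i, |(B *ᵥ x) i| ^ p)
    {x : Fin d → ℝ} (hx : B *ᵥ x ≠ 0) :
    |a ⬝ᵥ x| ^ p / ∑ i, |(B *ᵥ x) i| ^ p ≤ sens p B a := by
  refine le_csSup ⟨c, ?_⟩ ⟨x, hx, rfl⟩
  rintro r ⟨y, hy, rfl⟩
  exact (div_le_iff₀ (sum_abs_rpow_pos hy p)).2 (h y hy)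

end Sensitivity

section Norms

variable {ι : Type*} [Fintype ι]

lemma dotProduct_self_nonneg (v : ι → ℝ) : 0 ≤ v ⬝ᵥ v :=
  Finset.sum_nonneg fun i _ => mul_self_nonneg (v i)

lemma sqrt_dotProduct_self_le_sum_abs (w : ι → ℝ) : √(w ⬝ᵥ w) ≤ ∑ i, |w i| := by
  refine Real.sqrt_le_iff.2 ⟨by positivity, ?_⟩
  simpa only [dotProduct, ← sq, sq_abs] using
    Finset.sum_sq_le_sq_sum_of_nonneg (s := Finset.univ) (fun i _ => abs_nonneg (w i))

lemma abs_dotProduct_le_sqrt_mul_sum_abs (v w : ι → ℝ) :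
    |v ⬝ᵥ w| ≤ √(v ⬝ᵥ v) * ∑ i, |w i| := by
  have hcs : (v ⬝ᵥ w) ^ 2 ≤ (v ⬝ᵥ v) * (w ⬝ᵥ w) := by
    simpa only [dotProduct, ← sq] using Finset.sum_mul_sq_le_sq_mul_sq Finset.univ v w
  calc |v ⬝ᵥ w| ≤ √(v ⬝ᵥ v) * √(w ⬝ᵥ w) := by
        rw [← Real.sqrt_mul (dotProduct_self_nonneg v), ← Real.sqrt_sq_eq_abs]
        exact Real.sqrt_le_sqrt hcs
    _ ≤ √(v ⬝ᵥ v) * ∑ i, |w i| := by gcongr; exact sqrt_dotProduct_self_le_sum_abs w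

lemma sqrt_dotProduct_self_div_card_le (v : ι → ℝ) :
    √(v ⬝ᵥ v / Fintype.card ι) ≤ v ⬝ᵥ v / ∑ i, |v i| := by
  have hv := dotProduct_self_nonneg v
  rcases (Finset.sum_nonneg fun i _ => abs_nonneg (v i)).eq_or_lt with h0 | hpos
  · have hvv : v ⬝ᵥ v ≤ 0 := Real.sqrt_eq_zero'.1 <|
      le_antisymm (h0 ▸ sqrt_dotProduct_self_le_sum_abs v) (Real.sqrt_nonneg _)
    simp [hvv.antisymm hv]
  have hcard : (0 : ℝ) < Fintype.card ι := by
    obtain ⟨i, -, -⟩ := Finset.exists_ne_zero_of_sum_ne_zero hpos.ne'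
    exact_mod_cast Fintype.card_pos_iff.2 ⟨i⟩
  have hsq : (∑ i, |v i|) ^ 2 ≤ Fintype.card ι * (v ⬝ᵥ v) := by
    simpa only [dotProduct, ← sq, sq_abs, Finset.card_univ] using
      sq_sum_le_card_mul_sum_sq (s := Finset.univ) (f := fun i => |v i|)
  rw [le_div_iff₀ hpos]
  calc √(v ⬝ᵥ v / Fintype.card ι) * ∑ i, |v i|
      = √(v ⬝ᵥ v / Fintype.card ι * (∑ i, |v i|) ^ 2) := by
        rw [Real.sqrt_mul (by positivity), Real.sqrt_sq hpos.le]
    _ ≤ √(v ⬝ᵥ v / Fintype.card ι * (Fintype.card ι * (v ⬝ᵥ v))) := by gcongr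
    _ = v ⬝ᵥ v := by rw [← mul_assoc, div_mul_cancel₀ _ hcard.ne', Real.sqrt_mul_self hv]

end Norms

section Leverage

variable {m n : Type*} [Fintype m] [Fintype n] [DecidableEq n] {A : Matrix m n ℝ}

lemma isUnit_det_transpose_mul_self (hA : LinearIndependent ℝ Aᵀ) : IsUnit (Aᵀ * A).det := by
  rw [← isUnit_iff_isUnit_det]
  simpa using (PosDef.conjTranspose_mul_self A (mulVec_injective_iff.2 hA)).isUnit

lemma dotProduct_eq_dotProduct_mulVec_inv (hA : LinearIndependent ℝ Aᵀ) (a x : n → ℝ) :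
    a ⬝ᵥ x = (A *ᵥ ((Aᵀ * A)⁻¹ *ᵥ a)) ⬝ᵥ (A *ᵥ x) := by
  rw [dotProduct_mulVec, ← mulVec_transpose, mulVec_mulVec, mulVec_mulVec,
    mul_nonsing_inv _ (isUnit_det_transpose_mul_self hA), one_mulVec]

end Leverage

/-- **Crude ℓ1 sensitivity approximation via leverage scores:**
`√(τ_i(A)/n) ≤ σ_1(a_i) ≤ √(τ_i(A))`. -/
theorem l1_sensitivity_leverage_sandwich
    {n d : ℕ} (A : Matrix (Fin n) (Fin d) ℝ)
    (hA : LinearIndependent ℝ Aᵀ) (i : Fin n) :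
    Real.sqrt (leverageScore A i / n) ≤ sens 1 A (A i) ∧
      sens 1 A (A i) ≤ Real.sqrt (leverageScore A i) := by
  set u := (Aᵀ * A)⁻¹ *ᵥ A i
  set v := A *ᵥ u
  have hrepr : ∀ x, A i ⬝ᵥ x = v ⬝ᵥ (A *ᵥ x) := dotProduct_eq_dotProduct_mulVec_inv hA (A i)
  have hτ : leverageScore A i = v ⬝ᵥ v := hrepr u
  have hbound : ∀ x, A *ᵥ x ≠ 0 →
      |A i ⬝ᵥ x| ^ (1 : ℝ) ≤ √(leverageScore A i) * ∑ k, |(A *ᵥ x) k| ^ (1 : ℝ) := by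
    intro x _
    simpa only [Real.rpow_one, hrepr x, hτ] using abs_dotProduct_le_sqrt_mul_sum_abs v (A *ᵥ x)
  refine ⟨?_, sens_le (Real.sqrt_nonneg _) hbound⟩
  by_cases hv : v = 0
  · simpa [hτ, hv] using sens_nonneg 1 A (A i)
  calc √(leverageScore A i / n) ≤ v ⬝ᵥ v / ∑ k, |v k| := by
        simpa [hτ] using sqrt_dotProduct_self_div_card_le v
    _ = |A i ⬝ᵥ u| ^ (1 : ℝ) / ∑ k, |v k| ^ (1 : ℝ) := by
        have hτu : leverageScore A i = A i ⬝ᵥ u := rfl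
        simp only [Real.rpow_one, ← hτ, ← hτu, abs_of_nonneg (hτ ▸ dotProduct_self_nonneg v)]
    _ ≤ sens 1 A (A i) := le_sens hbound hv
end

section
/- Let A ∈ ℝ^{n×d} have full column rank, with rows a_1,…,a_n, and let p ≥ 1. Then for every i ∈ {1,…,n}: if 1 ≤ p ≤ 2, then τ_i(A)^{p/2} / n^{1−p/2} ≤ σ_p(a_i) ≤ τ_i(A)^{p/2}; and if p ≥ 2, then τ_i(A)^{p/2} ≤ σ_p(a_i) ≤ n^{p/2−1} · τ_i(A)^{p/2}. -/
open Matrix BigOperators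

private lemma abs_rpow_eq_sq_rpow (y : ℝ) (p : ℝ) : |y| ^ p = (y ^ 2) ^ (p / 2) := by
  rw [← sq_abs y, ← Real.rpow_natCast |y| 2, ← Real.rpow_mul (abs_nonneg y)]
  congr 1
  ring

private lemma sum_rpow_le_rpow_sum' {n : ℕ} {q : ℝ} (hq : 1 ≤ q) {b : Fin n → ℝ}
    (hb : ∀ i, 0 ≤ b i) : ∑ i, b i ^ q ≤ (∑ i, b i) ^ q := by
  have hS0 : 0 ≤ ∑ i, b i := Finset.sum_nonneg fun i _ => hb i
  rcases eq_or_lt_of_le hS0 with h | hSpos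
  · have hb0 : ∀ i ∈ Finset.univ, b i = 0 :=
      (Finset.sum_eq_zero_iff_of_nonneg (fun i _ => hb i)).mp h.symm
    have : ∀ i ∈ (Finset.univ : Finset (Fin n)), b i ^ q = 0 := by
      intro i hi; rw [hb0 i hi, Real.zero_rpow (by linarith)]
    rw [Finset.sum_congr rfl this, Finset.sum_const, smul_zero, ← h,
      Real.zero_rpow (by linarith)]
  · have key : ∀ i, b i ^ q ≤ (∑ j, b j) ^ (q - 1) * b i := by
      intro i
      rcases eq_or_lt_of_le (hb i) with h | h
      · rw [← h, Real.zero_rpow (by linarith), mul_zero]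
      · have hbi : b i ≤ ∑ j, b j := Finset.single_le_sum (fun j _ => hb j) (Finset.mem_univ i)
        calc b i ^ q = b i ^ (q - 1) * b i := by
              nth_rewrite 1 [show q = (q - 1) + 1 by ring]
              rw [Real.rpow_add h, Real.rpow_one]
          _ ≤ (∑ j, b j) ^ (q - 1) * b i := by
              exact mul_le_mul_of_nonneg_right
                (Real.rpow_le_rpow (le_of_lt h) hbi (by linarith)) (hb i)
    calc ∑ i, b i ^ q ≤ ∑ i, (∑ j, b j) ^ (q - 1) * b i :=
          Finset.sum_le_sum fun i _ => key i
      _ = (∑ j, b j) ^ (q - 1) * ∑ i, b i := by rw [← Finset.mul_sum]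
      _ = (∑ i, b i) ^ q := by
          nth_rewrite 2 [show q = (q - 1) + 1 by ring]
          rw [Real.rpow_add hSpos, Real.rpow_one]

private lemma rpow_sum_le_sum_rpow' {n : ℕ} {q : ℝ} (hq0 : 0 < q) (hq : q ≤ 1) {b : Fin n → ℝ}
    (hb : ∀ i, 0 ≤ b i) : (∑ i, b i) ^ q ≤ ∑ i, b i ^ q := by
  have hS0 : 0 ≤ ∑ i, b i := Finset.sum_nonneg fun i _ => hb i
  rcases eq_or_lt_of_le hS0 with h | hSpos
  · rw [← h, Real.zero_rpow hq0.ne']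
    exact Finset.sum_nonneg fun i _ => Real.rpow_nonneg (hb i) q
  · have expand : (∑ i, b i) ^ q = ∑ i, b i * (∑ j, b j) ^ (q - 1) := by
      rw [← Finset.sum_mul]
      nth_rewrite 1 [show q = 1 + (q - 1) by ring]
      rw [Real.rpow_add hSpos, Real.rpow_one]
    rw [expand]
    refine Finset.sum_le_sum fun i _ => ?_
    rcases eq_or_lt_of_le (hb i) with h | h
    · rw [← h, zero_mul]
      exact Real.rpow_nonneg le_rfl q
    · have hbi : b i ≤ ∑ j, b j := Finset.single_le_sum (fun j _ => hb j) (Finset.mem_univ i)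
      calc b i * (∑ j, b j) ^ (q - 1) ≤ b i * b i ^ (q - 1) :=
            mul_le_mul_of_nonneg_left
              (Real.rpow_le_rpow_of_nonpos h hbi (by linarith)) (hb i)
        _ = b i ^ q := by
            nth_rewrite 1 [show b i = b i ^ (1 : ℝ) from (Real.rpow_one _).symm]
            rw [← Real.rpow_add h]
            norm_num

private lemma sum_rpow_le_card_mul_rpow_sum {n : ℕ} (hn : 0 < n) {q : ℝ} (hq0 : 0 < q)
    (hq : q ≤ 1) {b : Fin n → ℝ} (hb : ∀ i, 0 ≤ b i) :
    ∑ i, b i ^ q ≤ (n : ℝ) ^ (1 - q) * (∑ i, b i) ^ q := by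
  have hN : (0:ℝ) < n := by exact_mod_cast hn
  have hw : ∑ _i : Fin n, (n : ℝ)⁻¹ = 1 := by
    rw [Finset.sum_const, Finset.card_univ, Fintype.card_fin, nsmul_eq_mul]
    field_simp
  have hp1 : (1:ℝ) ≤ 1 / q := by
    rw [le_div_iff₀ hq0]; linarith
  have key := Real.arith_mean_le_rpow_mean Finset.univ (fun _ : Fin n => (n : ℝ)⁻¹)
    (fun i => b i ^ q) (fun i _ => by positivity) hw
    (fun i _ => Real.rpow_nonneg (hb i) q) hp1
  have hzp : ∀ i : Fin n, (b i ^ q) ^ (1 / q) = b i := by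
    intro i
    rw [← Real.rpow_mul (hb i), mul_one_div, div_self hq0.ne', Real.rpow_one]
  simp only [hzp] at key
  have hL : ∑ i : Fin n, (n : ℝ)⁻¹ * b i ^ q = (n : ℝ)⁻¹ * ∑ i, b i ^ q := by
    rw [Finset.mul_sum]
  have hR : (∑ i : Fin n, (n : ℝ)⁻¹ * b i) = (n : ℝ)⁻¹ * ∑ i, b i := by
    rw [Finset.mul_sum]
  rw [hL, hR] at key
  have h1q : (1:ℝ) / (1 / q) = q := by field_simp
  rw [h1q, Real.mul_rpow (by positivity) (Finset.sum_nonneg fun i _ => hb i),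
    Real.inv_rpow hN.le] at key
  have := mul_le_mul_of_nonneg_left key hN.le
  calc ∑ i, b i ^ q = (n:ℝ) * ((n:ℝ)⁻¹ * ∑ i, b i ^ q) := by field_simp
    _ ≤ (n:ℝ) * (((n:ℝ) ^ q)⁻¹ * (∑ i, b i) ^ q) := this
    _ = (n : ℝ) ^ (1 - q) * (∑ i, b i) ^ q := by
        rw [Real.rpow_sub hN, Real.rpow_one]
        field_simp

private lemma card_mul_rpow_sum_le_sum_rpow {n : ℕ} (hn : 0 < n) {q : ℝ} (hq : 1 ≤ q)
    {b : Fin n → ℝ} (hb : ∀ i, 0 ≤ b i) :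
    (n : ℝ) ^ (1 - q) * (∑ i, b i) ^ q ≤ ∑ i, b i ^ q := by
  have hN : (0:ℝ) < n := by exact_mod_cast hn
  have hw : ∑ _i : Fin n, (n : ℝ)⁻¹ = 1 := by
    rw [Finset.sum_const, Finset.card_univ, Fintype.card_fin, nsmul_eq_mul]
    field_simp
  have key := Real.rpow_arith_mean_le_arith_mean_rpow Finset.univ (fun _ : Fin n => (n : ℝ)⁻¹)
    b (fun i _ => by positivity) hw (fun i _ => hb i) hq
  have hL : ∑ i : Fin n, (n : ℝ)⁻¹ * b i = (n : ℝ)⁻¹ * ∑ i, b i := by rw [Finset.mul_sum]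
  have hR : ∑ i : Fin n, (n : ℝ)⁻¹ * b i ^ q = (n : ℝ)⁻¹ * ∑ i, b i ^ q := by
    rw [Finset.mul_sum]
  rw [hL, hR, Real.mul_rpow (by positivity) (Finset.sum_nonneg fun i _ => hb i),
    Real.inv_rpow hN.le] at key
  have := mul_le_mul_of_nonneg_left key hN.le
  calc (n : ℝ) ^ (1 - q) * (∑ i, b i) ^ q
      = (n:ℝ) * (((n:ℝ) ^ q)⁻¹ * (∑ i, b i) ^ q) := by
        rw [Real.rpow_sub hN, Real.rpow_one]
        field_simp
    _ ≤ (n:ℝ) * ((n:ℝ)⁻¹ * ∑ i, b i ^ q) := this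
    _ = ∑ i, b i ^ q := by field_simp


/-- **Crude ℓp sensitivity approximation via leverage scores:**
for `1 ≤ p ≤ 2`, `τ_i(A)^{p/2} / n^{1-p/2} ≤ σ_p(a_i) ≤ τ_i(A)^{p/2}`, and
for `p ≥ 2`, `τ_i(A)^{p/2} ≤ σ_p(a_i) ≤ n^{p/2-1} · τ_i(A)^{p/2}`. -/
theorem lp_sensitivity_leverage_sandwich
    {n d : ℕ} (A : Matrix (Fin n) (Fin d) ℝ)
    (hA : LinearIndependent ℝ Aᵀ) (p : ℝ) (hp : 1 ≤ p) (i : Fin n) :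
    (p ≤ 2 →
      (leverageScore A i) ^ (p / 2) / (n : ℝ) ^ (1 - p / 2) ≤ sens p A (A i) ∧
        sens p A (A i) ≤ (leverageScore A i) ^ (p / 2)) ∧
    (2 ≤ p →
      (leverageScore A i) ^ (p / 2) ≤ sens p A (A i) ∧
        sens p A (A i) ≤ (n : ℝ) ^ (p / 2 - 1) * (leverageScore A i) ^ (p / 2)) := by
  classical
  have hn : 0 < n := i.pos
  have hN : (0:ℝ) < n := by exact_mod_cast hn
  have hq0 : 0 < p / 2 := by linarith
  -- injectivity of A
  have hInj : Function.Injective A.mulVec := Matrix.mulVec_injective_iff.mpr hA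
  have hker : ∀ x : Fin d → ℝ, A.mulVec x = 0 → x = 0 := by
    intro x hx
    apply hInj
    rw [hx, Matrix.mulVec_zero]
  -- quadratic form identity
  have hquad : ∀ x : Fin d → ℝ, x ⬝ᵥ (Aᵀ * A).mulVec x = ∑ j, (A.mulVec x j) ^ 2 := by
    intro x
    rw [← Matrix.mulVec_mulVec, Matrix.dotProduct_mulVec, Matrix.vecMul_transpose]
    simp [dotProduct, pow_two]
  -- Gram matrix is invertible
  have hGinj : Function.Injective (Aᵀ * A).mulVec := by
    have hker' : ∀ x : Fin d → ℝ, (Aᵀ * A).mulVec x = 0 → x = 0 := by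
      intro x hx
      have h1 : ∑ j, (A.mulVec x j) ^ 2 = 0 := by
        rw [← hquad x, hx, dotProduct_zero]
      have h2 : A.mulVec x = 0 := by
        funext j
        have := (Finset.sum_eq_zero_iff_of_nonneg
          (fun j _ => sq_nonneg (A.mulVec x j))).mp h1 j (Finset.mem_univ j)
        exact pow_eq_zero_iff (n := 2) (by norm_num) |>.mp this
      exact hker x h2
    intro x y hxy
    have h0 : (Aᵀ * A).mulVec (x - y) = 0 := by
      rw [Matrix.mulVec_sub, hxy, sub_self]
    exact sub_eq_zero.mp (hker' _ h0)
  have hGu : IsUnit (Aᵀ * A) := Matrix.mulVec_injective_iff_isUnit.mp hGinj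
  have hGdet : IsUnit (Aᵀ * A).det := (Matrix.isUnit_iff_isUnit_det _).mp hGu
  set w : Fin d → ℝ := ((Aᵀ * A)⁻¹).mulVec (A i) with hw_def
  have hGw : (Aᵀ * A).mulVec w = A i := by
    rw [hw_def, Matrix.mulVec_mulVec, Matrix.mul_nonsing_inv _ hGdet, Matrix.one_mulVec]
  have hkey : ∀ x : Fin d → ℝ, (A.mulVec w) ⬝ᵥ (A.mulVec x) = A i ⬝ᵥ x := by
    intro x
    rw [Matrix.dotProduct_mulVec, ← Matrix.mulVec_transpose, Matrix.mulVec_mulVec, hGw]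
  set τ : ℝ := leverageScore A i with hτ_def
  have hτ_sum : τ = ∑ j, (A.mulVec w j) ^ 2 := by
    have h1 : τ = A i ⬝ᵥ w := rfl
    rw [h1, ← hkey w]
    simp [dotProduct, pow_two]
  have hτ0 : (0:ℝ) ≤ τ := by
    rw [hτ_sum]; exact Finset.sum_nonneg fun j _ => sq_nonneg _
  -- Cauchy–Schwarz
  have hCS : ∀ x : Fin d → ℝ, (A i ⬝ᵥ x) ^ 2 ≤ τ * ∑ j, (A.mulVec x j) ^ 2 := by
    intro x
    rw [← hkey x, hτ_sum]
    have := Finset.sum_mul_sq_le_sq_mul_sq Finset.univ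
      (fun j => A.mulVec w j) (fun j => A.mulVec x j)
    simpa [dotProduct] using this
  -- the sensitivity set
  set Sset : Set ℝ := {r : ℝ | ∃ x : Fin d → ℝ, A.mulVec x ≠ 0 ∧
    r = |A i ⬝ᵥ x| ^ p / ∑ j, |A.mulVec x j| ^ p} with hS_def
  have hsens : sens p A (A i) = sSup Sset := rfl
  have hden : ∀ x : Fin d → ℝ, (∑ j, |A.mulVec x j| ^ p) = ∑ j, ((A.mulVec x j) ^ 2) ^ (p / 2) :=
    fun x => Finset.sum_congr rfl fun j _ => abs_rpow_eq_sq_rpow _ p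
  have ht_pos : ∀ x : Fin d → ℝ, A.mulVec x ≠ 0 → 0 < ∑ j, (A.mulVec x j) ^ 2 := by
    intro x hx
    obtain ⟨j, hj⟩ : ∃ j, A.mulVec x j ≠ 0 := by
      by_contra h; push_neg at h; exact hx (funext h)
    exact Finset.sum_pos' (fun k _ => sq_nonneg _) ⟨j, Finset.mem_univ j, by positivity⟩
  have hD_pos : ∀ x : Fin d → ℝ, A.mulVec x ≠ 0 → 0 < ∑ j, ((A.mulVec x j) ^ 2) ^ (p / 2) := by
    intro x hx
    obtain ⟨j, hj⟩ : ∃ j, A.mulVec x j ≠ 0 := by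
      by_contra h; push_neg at h; exact hx (funext h)
    refine Finset.sum_pos' (fun k _ => Real.rpow_nonneg (sq_nonneg _) _)
      ⟨j, Finset.mem_univ j, Real.rpow_pos_of_pos (by positivity) _⟩
  have main_num : ∀ x : Fin d → ℝ,
      |A i ⬝ᵥ x| ^ p ≤ τ ^ (p / 2) * (∑ j, (A.mulVec x j) ^ 2) ^ (p / 2) := by
    intro x
    rw [abs_rpow_eq_sq_rpow, ← Real.mul_rpow hτ0
      (Finset.sum_nonneg fun j _ => sq_nonneg _)]
    exact Real.rpow_le_rpow (sq_nonneg _) (hCS x) hq0.le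
  have hel_nonneg : ∀ r ∈ Sset, (0:ℝ) ≤ r := by
    rintro r ⟨x, hx, rfl⟩
    apply div_nonneg (Real.rpow_nonneg (abs_nonneg _) _)
    exact Finset.sum_nonneg fun j _ => Real.rpow_nonneg (abs_nonneg _) _
  -- upper bounds on all elements of the set
  have hub_le2 : p ≤ 2 → ∀ r ∈ Sset, r ≤ τ ^ (p / 2) := by
    intro hp2 r hr
    obtain ⟨x, hx, rfl⟩ := hr
    rw [hden x, div_le_iff₀ (hD_pos x hx)]
    calc |A i ⬝ᵥ x| ^ p ≤ τ ^ (p / 2) * (∑ j, (A.mulVec x j) ^ 2) ^ (p / 2) := main_num x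
      _ ≤ τ ^ (p / 2) * ∑ j, ((A.mulVec x j) ^ 2) ^ (p / 2) :=
          mul_le_mul_of_nonneg_left
            (rpow_sum_le_sum_rpow' hq0 (by linarith) (fun j => sq_nonneg _))
            (Real.rpow_nonneg hτ0 _)
  have hNN : (n:ℝ) ^ (p / 2 - 1) * (n:ℝ) ^ (1 - p / 2) = 1 := by
    rw [← Real.rpow_add hN, show p / 2 - 1 + (1 - p / 2) = 0 by ring, Real.rpow_zero]
  have hub_ge2 : 2 ≤ p → ∀ r ∈ Sset, r ≤ (n:ℝ) ^ (p / 2 - 1) * τ ^ (p / 2) := by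
    intro hp2 r hr
    obtain ⟨x, hx, rfl⟩ := hr
    rw [hden x, div_le_iff₀ (hD_pos x hx)]
    have hlow : (n:ℝ) ^ (1 - p / 2) * (∑ j, (A.mulVec x j) ^ 2) ^ (p / 2)
        ≤ ∑ j, ((A.mulVec x j) ^ 2) ^ (p / 2) :=
      card_mul_rpow_sum_le_sum_rpow hn (by linarith) (fun j => sq_nonneg _)
    calc |A i ⬝ᵥ x| ^ p ≤ τ ^ (p / 2) * (∑ j, (A.mulVec x j) ^ 2) ^ (p / 2) := main_num x
      _ = ((n:ℝ) ^ (p / 2 - 1) * τ ^ (p / 2)) *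
            ((n:ℝ) ^ (1 - p / 2) * (∑ j, (A.mulVec x j) ^ 2) ^ (p / 2)) := by
          rw [mul_mul_mul_comm, hNN, one_mul]
      _ ≤ ((n:ℝ) ^ (p / 2 - 1) * τ ^ (p / 2)) * ∑ j, ((A.mulVec x j) ^ 2) ^ (p / 2) := by
          refine mul_le_mul_of_nonneg_left hlow ?_
          positivity
  refine ⟨fun hp2 => ⟨?_, ?_⟩, fun hp2 => ⟨?_, ?_⟩⟩
  -- lower bound, p ≤ 2
  · by_cases hAi : A i = 0
    · have hτz : τ = 0 := by
        rw [hτ_def, leverageScore, hAi, zero_dotProduct]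
      rw [hτz, Real.zero_rpow hq0.ne', zero_div, hsens]
      exact Real.sSup_nonneg hel_nonneg
    · have hw_ne : A.mulVec w ≠ 0 := by
        intro h
        apply hAi
        rw [← hGw, ← Matrix.mulVec_mulVec, h, Matrix.mulVec_zero]
      have hτpos : 0 < τ := by rw [hτ_sum]; exact ht_pos w hw_ne
      have haw : A i ⬝ᵥ w = τ := by
        rw [← hkey w, hτ_sum]
        simp [dotProduct, pow_two]
      have hnum₀ : |A i ⬝ᵥ w| ^ p = τ ^ (p / 2) * τ ^ (p / 2) := by
        have h2 : τ ^ (p / 2) * τ ^ (p / 2) = τ ^ p := by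
          rw [← Real.rpow_add hτpos]
          norm_num
        rw [haw, abs_of_pos hτpos, h2]
      have hmem : (|A i ⬝ᵥ w| ^ p / ∑ j, |A.mulVec w j| ^ p) ∈ Sset := ⟨w, hw_ne, rfl⟩
      have hbdd : BddAbove Sset := ⟨τ ^ (p / 2), fun r hr => hub_le2 hp2 r hr⟩
      have hD₀le : ∑ j, ((A.mulVec w j) ^ 2) ^ (p / 2)
          ≤ (n:ℝ) ^ (1 - p / 2) * τ ^ (p / 2) := by
        have := sum_rpow_le_card_mul_rpow_sum hn hq0 (by linarith)
          (fun j => sq_nonneg (A.mulVec w j))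
        rwa [← hτ_sum] at this
      have hle : τ ^ (p / 2) / (n:ℝ) ^ (1 - p / 2)
          ≤ |A i ⬝ᵥ w| ^ p / ∑ j, |A.mulVec w j| ^ p := by
        rw [hden w, hnum₀, div_le_div_iff₀ (Real.rpow_pos_of_pos hN _) (hD_pos w hw_ne)]
        calc τ ^ (p / 2) * ∑ j, ((A.mulVec w j) ^ 2) ^ (p / 2)
            ≤ τ ^ (p / 2) * ((n:ℝ) ^ (1 - p / 2) * τ ^ (p / 2)) :=
              mul_le_mul_of_nonneg_left hD₀le (Real.rpow_nonneg hτ0 _)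
          _ = τ ^ (p / 2) * τ ^ (p / 2) * (n:ℝ) ^ (1 - p / 2) := by ring
      rw [hsens]
      exact le_trans hle (le_csSup hbdd hmem)
  -- upper bound, p ≤ 2
  · rw [hsens]
    exact Real.sSup_le (hub_le2 hp2) (Real.rpow_nonneg hτ0 _)
  -- lower bound, p ≥ 2
  · by_cases hAi : A i = 0
    · have hτz : τ = 0 := by
        rw [hτ_def, leverageScore, hAi, zero_dotProduct]
      rw [hτz, Real.zero_rpow hq0.ne', hsens]
      exact Real.sSup_nonneg hel_nonneg
    · have hw_ne : A.mulVec w ≠ 0 := by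
        intro h
        apply hAi
        rw [← hGw, ← Matrix.mulVec_mulVec, h, Matrix.mulVec_zero]
      have hτpos : 0 < τ := by rw [hτ_sum]; exact ht_pos w hw_ne
      have haw : A i ⬝ᵥ w = τ := by
        rw [← hkey w, hτ_sum]
        simp [dotProduct, pow_two]
      have hnum₀ : |A i ⬝ᵥ w| ^ p = τ ^ (p / 2) * τ ^ (p / 2) := by
        have h2 : τ ^ (p / 2) * τ ^ (p / 2) = τ ^ p := by
          rw [← Real.rpow_add hτpos]
          norm_num
        rw [haw, abs_of_pos hτpos, h2]
      have hmem : (|A i ⬝ᵥ w| ^ p / ∑ j, |A.mulVec w j| ^ p) ∈ Sset := ⟨w, hw_ne, rfl⟩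
      have hbdd : BddAbove Sset :=
        ⟨(n:ℝ) ^ (p / 2 - 1) * τ ^ (p / 2), fun r hr => hub_ge2 hp2 r hr⟩
      have hD₀le : ∑ j, ((A.mulVec w j) ^ 2) ^ (p / 2) ≤ τ ^ (p / 2) := by
        have := sum_rpow_le_rpow_sum' (by linarith : 1 ≤ p / 2)
          (fun j => sq_nonneg (A.mulVec w j))
        rwa [← hτ_sum] at this
      have hle : τ ^ (p / 2) ≤ |A i ⬝ᵥ w| ^ p / ∑ j, |A.mulVec w j| ^ p := by
        rw [hden w, hnum₀, le_div_iff₀ (hD_pos w hw_ne)]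
        exact mul_le_mul_of_nonneg_left hD₀le (Real.rpow_nonneg hτ0 _)
      rw [hsens]
      exact le_trans hle (le_csSup hbdd hmem)
  -- upper bound, p ≥ 2
  · rw [hsens]
    exact Real.sSup_le (hub_ge2 hp2) (by positivity)
end

section
/- Let A ∈ ℝ^{n×d} have full column rank, let p ≥ 1, let B ∈ ℝ^{α×d} be a matrix each of whose rows is a row of A, and let a be the i-th row of B for some fixed i ∈ {1,…,α}. Let r be a uniformly random vector in {−1,+1}^α. Then with probability at least 1/2, σ_p^A(Bᵀr) ≥ σ_p^A(a), where Bᵀr ∈ ℝ^d denotes the signed combination of the rows of B with signs r. -/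
open Matrix BigOperators

/-- The real sign vector encoded by a Boolean vector: `true ↦ 1`, `false ↦ -1`. -/
def signVec {α : ℕ} (r : Fin α → Bool) : Fin α → ℝ :=
  fun k => if r k then 1 else -1

set_option maxHeartbeats 1000000

lemma mulVec_eq_zero_of {n d : ℕ} {A : Matrix (Fin n) (Fin d) ℝ}
    (hA : LinearIndependent ℝ Aᵀ) {x : Fin d → ℝ} (hx : A.mulVec x = 0) : x = 0 := by
  have h : ∑ j, x j • Aᵀ j = 0 := by
    funext k
    have := congrFun hx k
    simpa [Matrix.mulVec, dotProduct, mul_comm, Finset.sum_apply] using this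
  have := Fintype.linearIndependent_iff.mp hA x h
  funext j; exact this j

lemma rpow_cont {p : ℝ} (hp : 0 < p) : Continuous fun t : ℝ => t ^ p := by
  rw [continuous_iff_continuousAt]
  intro t
  exact Real.continuousAt_rpow_const t p (Or.inr hp.le)

lemma bddAbove_S {n d : ℕ} {A : Matrix (Fin n) (Fin d) ℝ}
    (hA : LinearIndependent ℝ Aᵀ) {p : ℝ} (hp : 0 < p) (a : Fin d → ℝ) :
    BddAbove {r : ℝ | ∃ x : Fin d → ℝ, A.mulVec x ≠ 0 ∧
      r = |a ⬝ᵥ x| ^ p / ∑ i, |A.mulVec x i| ^ p} := by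
  set f : (Fin d → ℝ) → ℝ :=
    fun x => |a ⬝ᵥ x| ^ p / ∑ i, |A.mulVec x i| ^ p with hf
  have hdot : ∀ b : Fin d → ℝ, Continuous fun x : Fin d → ℝ => b ⬝ᵥ x := by
    intro b
    exact continuous_finset_sum _ fun j _ => (continuous_const.mul (continuous_apply j))
  have hnum : Continuous fun x : Fin d → ℝ => |a ⬝ᵥ x| ^ p :=
    (rpow_cont hp).comp (hdot a).abs
  have hden : Continuous fun x : Fin d → ℝ => ∑ i, |A.mulVec x i| ^ p := by
    refine continuous_finset_sum _ fun k _ => ?_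
    exact (rpow_cont hp).comp (hdot (A k)).abs
  have hsph : IsCompact (Metric.sphere (0 : Fin d → ℝ) 1) := isCompact_sphere 0 1
  have hcont : ContinuousOn f (Metric.sphere (0 : Fin d → ℝ) 1) := by
    apply ContinuousOn.div hnum.continuousOn hden.continuousOn
    intro x hx
    have hx0 : x ≠ 0 := by
      intro h
      simp [h] at hx
    have hAx : A.mulVec x ≠ 0 := fun h => hx0 (mulVec_eq_zero_of hA h)
    obtain ⟨k, hk⟩ := Function.ne_iff.mp hAx
    have hpos : 0 < ∑ i, |A.mulVec x i| ^ p := by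
      refine Finset.sum_pos' (fun j _ => Real.rpow_nonneg (abs_nonneg _) p) ⟨k, Finset.mem_univ k, ?_⟩
      exact Real.rpow_pos_of_pos (abs_pos.mpr (by simpa using hk)) p
    exact ne_of_gt hpos
  have him : BddAbove (f '' Metric.sphere (0 : Fin d → ℝ) 1) :=
    (hsph.image_of_continuousOn hcont).bddAbove
  refine him.mono ?_
  rintro ρ ⟨x, hx, rfl⟩
  have hx0 : x ≠ 0 := fun h => hx (by simp [h])
  have hnx : (0:ℝ) < ‖x‖ := norm_pos_iff.mpr hx0
  refine ⟨‖x‖⁻¹ • x, ?_, ?_⟩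
  · simp [norm_smul, abs_of_pos (inv_pos.mpr hnx), inv_mul_cancel₀ (ne_of_gt hnx)]
  · have hc : (0:ℝ) < |‖x‖⁻¹| ^ p :=
      Real.rpow_pos_of_pos (abs_pos.mpr (inv_ne_zero (ne_of_gt hnx))) p
    have habs : ∀ t : ℝ, |‖x‖⁻¹ * t| ^ p = |‖x‖⁻¹| ^ p * |t| ^ p := by
      intro t
      rw [abs_mul, Real.mul_rpow (abs_nonneg _) (abs_nonneg _)]
    have h1 : a ⬝ᵥ (‖x‖⁻¹ • x) = ‖x‖⁻¹ * (a ⬝ᵥ x) := by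
      simp [dotProduct_smul, smul_eq_mul]
    have h2 : A.mulVec (‖x‖⁻¹ • x) = ‖x‖⁻¹ • A.mulVec x := by
      rw [Matrix.mulVec_smul]
    rw [hf]
    simp only [h1, h2, Pi.smul_apply, smul_eq_mul, habs, ← Finset.mul_sum]
    rw [mul_div_mul_left _ _ (ne_of_gt hc)]

lemma sens_nonneg_s6 {n d : ℕ} {A : Matrix (Fin n) (Fin d) ℝ}
    (hA : LinearIndependent ℝ Aᵀ) {p : ℝ} (hp : 0 < p) (a : Fin d → ℝ)
    {x0 : Fin d → ℝ} (hx0 : A.mulVec x0 ≠ 0) : 0 ≤ sens p A a := by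
  have hmem : |a ⬝ᵥ x0| ^ p / ∑ i, |A.mulVec x0 i| ^ p ∈
      {r : ℝ | ∃ x : Fin d → ℝ, A.mulVec x ≠ 0 ∧
        r = |a ⬝ᵥ x| ^ p / ∑ i, |A.mulVec x i| ^ p} := ⟨x0, hx0, rfl⟩
  have := le_csSup (bddAbove_S hA hp a) hmem
  refine le_trans ?_ this
  apply div_nonneg (Real.rpow_nonneg (abs_nonneg _) p)
  exact Finset.sum_nonneg fun j _ => Real.rpow_nonneg (abs_nonneg _) p

/-- **A random signed combination of rows dominates a fixed row's sensitivity
with probability at least 1/2:** if each row of `B` is a row of `A` and `a = B i`,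
then for a uniformly random sign vector `r ∈ {−1,+1}^α`, with probability ≥ 1/2 we
have `σ_p^A(Bᵀr) ≥ σ_p^A(a)`.  Probability here is counting measure on sign vectors. -/
theorem random_sign_combination_dominates_sensitivity
    {n d α : ℕ} (A : Matrix (Fin n) (Fin d) ℝ)
    (hA : LinearIndependent ℝ Aᵀ)
    (p : ℝ) (hp : 1 ≤ p)
    (B : Matrix (Fin α) (Fin d) ℝ)
    (hB : ∀ k : Fin α, ∃ j : Fin n, B k = A j)
    (i : Fin α) :
    2 * (Finset.univ.filter (fun r : Fin α → Bool =>
        sens p A (Bᵀ.mulVec (signVec r)) ≥ sens p A (B i))).card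
      ≥ Fintype.card (Fin α → Bool) := by
  classical
  have hp0 : (0:ℝ) < p := lt_of_lt_of_le one_pos hp
  set P : (Fin α → Bool) → Prop :=
    fun r => sens p A (Bᵀ.mulVec (signVec r)) ≥ sens p A (B i) with hPdef
  set φ : (Fin α → Bool) → (Fin α → Bool) :=
    fun r => Function.update r i (!r i) with hφdef
  have hφφ : ∀ r, φ (φ r) = r := by
    intro r; funext k
    by_cases hk : k = i
    · subst hk; simp [hφdef]
    · simp [hφdef, Function.update_of_ne hk]
  -- key step
  have hkey : ∀ r : Fin α → Bool, P r ∨ P (φ r) := by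
    intro r
    by_cases hd : ∃ x : Fin d → ℝ, A.mulVec x ≠ 0
    · obtain ⟨x0, hx0⟩ := hd
      have hmax : sens p A (B i) ≤
          max (sens p A (Bᵀ.mulVec (signVec r))) (sens p A (Bᵀ.mulVec (signVec (φ r)))) := by
        apply Real.sSup_le
        · rintro ρ ⟨x, hx, rfl⟩
          have hAx := hx
          have hpos : 0 < ∑ k, |A.mulVec x k| ^ p := by
            obtain ⟨k, hk⟩ := Function.ne_iff.mp hAx
            refine Finset.sum_pos' (fun j _ => Real.rpow_nonneg (abs_nonneg _) p)
              ⟨k, Finset.mem_univ k, ?_⟩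
            exact Real.rpow_pos_of_pos (abs_pos.mpr (by simpa using hk)) p
          set c : Fin α → ℝ := B.mulVec x with hc
          have ht : ∀ s : Fin α → Bool,
              (Bᵀ.mulVec (signVec s)) ⬝ᵥ x = ∑ k, signVec s k * c k := by
            intro s
            rw [Matrix.mulVec_transpose, ← Matrix.dotProduct_mulVec]
            rfl
          have hBi : B i ⬝ᵥ x = c i := rfl
          have hdiff : (∑ k, signVec r k * c k) - (∑ k, signVec (φ r) k * c k)
              = (signVec r i - signVec (φ r) i) * c i := by
            rw [← Finset.sum_sub_distrib]
            rw [Finset.sum_eq_single i]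
            · rw [sub_mul]
            · intro k _ hk
              have : signVec (φ r) k = signVec r k := by
                simp [signVec, hφdef, Function.update_of_ne hk]
              rw [this]; ring
            · intro h; exact absurd (Finset.mem_univ i) h
          have hsign : |signVec r i - signVec (φ r) i| = 2 := by
            have h1 : signVec (φ r) i = if r i then -1 else 1 := by
              cases h : r i <;> simp [signVec, hφdef, h]
            rw [h1]
            cases h : r i <;> simp [signVec, h] <;> norm_num
          have h2ci : 2 * |c i| ≤ |∑ k, signVec r k * c k| + |∑ k, signVec (φ r) k * c k| := by
            have := abs_sub (∑ k, signVec r k * c k) (∑ k, signVec (φ r) k * c k)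
            calc 2 * |c i| = |(signVec r i - signVec (φ r) i) * c i| := by
                  rw [abs_mul, hsign]
              _ = |(∑ k, signVec r k * c k) - (∑ k, signVec (φ r) k * c k)| := by rw [hdiff]
              _ ≤ _ := abs_sub _ _
          -- case on which is bigger
          have hfinal : ∀ s : Fin α → Bool, |c i| ≤ |(Bᵀ.mulVec (signVec s)) ⬝ᵥ x| →
              |B i ⬝ᵥ x| ^ p / ∑ k, |A.mulVec x k| ^ p ≤ sens p A (Bᵀ.mulVec (signVec s)) := by
            intro s hle
            have hmem : |(Bᵀ.mulVec (signVec s)) ⬝ᵥ x| ^ p / ∑ k, |A.mulVec x k| ^ p ∈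
                {ρ : ℝ | ∃ y : Fin d → ℝ, A.mulVec y ≠ 0 ∧
                  ρ = |(Bᵀ.mulVec (signVec s)) ⬝ᵥ y| ^ p / ∑ k, |A.mulVec y k| ^ p} :=
              ⟨x, hAx, rfl⟩
            refine le_trans ?_ (le_csSup (bddAbove_S hA hp0 _) hmem)
            have hrp : |B i ⬝ᵥ x| ^ p ≤ |(Bᵀ.mulVec (signVec s)) ⬝ᵥ x| ^ p := by
              refine Real.rpow_le_rpow (abs_nonneg _) ?_ hp0.le
              rw [hBi]; exact hle
            gcongr
          rcases le_total |(Bᵀ.mulVec (signVec r)) ⬝ᵥ x| |(Bᵀ.mulVec (signVec (φ r))) ⬝ᵥ x| with h | h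
          · refine le_trans (hfinal (φ r) ?_) (le_max_right _ _)
            have habs : |(Bᵀ.mulVec (signVec r)) ⬝ᵥ x| ≤ |(Bᵀ.mulVec (signVec (φ r))) ⬝ᵥ x| := h
            have e1 : (Bᵀ.mulVec (signVec r)) ⬝ᵥ x = ∑ k, signVec r k * c k := ht r
            have e2 : (Bᵀ.mulVec (signVec (φ r))) ⬝ᵥ x = ∑ k, signVec (φ r) k * c k := ht (φ r)
            rw [e1, e2] at habs
            rw [e2]
            linarith
          · refine le_trans (hfinal r ?_) (le_max_left _ _)
            have habs : |(Bᵀ.mulVec (signVec (φ r))) ⬝ᵥ x| ≤ |(Bᵀ.mulVec (signVec r)) ⬝ᵥ x| := h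
            have e1 : (Bᵀ.mulVec (signVec r)) ⬝ᵥ x = ∑ k, signVec r k * c k := ht r
            have e2 : (Bᵀ.mulVec (signVec (φ r))) ⬝ᵥ x = ∑ k, signVec (φ r) k * c k := ht (φ r)
            rw [e1, e2] at habs
            rw [e1]
            linarith
        · exact le_max_of_le_left (sens_nonneg_s6 hA hp0 _ hx0)
      rcases le_max_iff.mp hmax with h | h
      · left; exact h
      · right; exact h
    · push_neg at hd
      left
      have : ∀ a : Fin d → ℝ, sens p A a = 0 := by
        intro a
        have : {r : ℝ | ∃ x : Fin d → ℝ, A.mulVec x ≠ 0 ∧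
            r = |a ⬝ᵥ x| ^ p / ∑ k, |A.mulVec x k| ^ p} = ∅ := by
          ext ρ; simp only [Set.mem_setOf_eq, Set.mem_empty_iff_false, iff_false]
          rintro ⟨x, hx, _⟩; exact hx (hd x)
        rw [sens, this, Real.sSup_empty]
      rw [hPdef]; simp [this]
  -- counting
  set F := Finset.univ.filter (fun r : Fin α → Bool =>
      sens p A (Bᵀ.mulVec (signVec r)) ≥ sens p A (B i)) with hF
  set F' := Finset.univ.filter (fun r : Fin α → Bool => P (φ r)) with hF'
  have hmemF : ∀ r, r ∈ F ↔ P r := by intro r; simp [hF, hPdef]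
  have hmemF' : ∀ r, r ∈ F' ↔ P (φ r) := by intro r; simp [hF']
  have hcard : F'.card = F.card := by
    apply Finset.card_bij' (fun r _ => φ r) (fun r _ => φ r)
    · intro r hr; rw [hmemF]; exact (hmemF' r).mp hr
    · intro r hr; rw [hmemF']; rw [hφφ]; exact (hmemF r).mp hr
    · intro r _; exact hφφ r
    · intro r _; exact hφφ r
  have hsub : (Finset.univ : Finset (Fin α → Bool)) ⊆ F ∪ F' := by
    intro r _
    rcases hkey r with h | h
    · exact Finset.mem_union_left _ ((hmemF r).mpr h)
    · exact Finset.mem_union_right _ ((hmemF' r).mpr h)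
  calc Fintype.card (Fin α → Bool) = (Finset.univ : Finset (Fin α → Bool)).card := rfl
    _ ≤ (F ∪ F').card := Finset.card_le_card hsub
    _ ≤ F.card + F'.card := Finset.card_union_le _ _
    _ = 2 * F.card := by rw [hcard]; ring
end

section
/- Let A ∈ ℝ^{n×d} have full column rank with rows a_1,…,a_n, let α be an integer with 2 ≤ α ≤ n, and let S be a matrix such that (1/2)‖Ax‖₁ ≤ ‖SAx‖₁ ≤ (3/2)‖Ax‖₁ for all x ∈ ℝ^d. Fix i ∈ {1,…,n}. Let B ⊆ {1,…,n} be a uniformly random subset of size α among all size-α subsets containing i, let r^{(1)},…,r^{(100)} be i.i.d. uniform vectors in {−1,+1}^α independent of B, let A_B ∈ ℝ^{α×d} be the submatrix of A with rows indexed by B, and define σ̃ := max_{1≤k≤100} σ_1^{SA}(A_Bᵀ r^{(k)}). Then with probability at least 0.8, (2/3)·σ_1(a_i) ≤ σ̃ ≤ 2·σ_1(a_i) + 20·(α/n)·𝔖_1(A). -/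
open Matrix BigOperators
open scoped Classical

/-!
Write `σ j` for the ℓ₁ sensitivity of row `j` and let `y` maximise `|⟨a_i, x⟩| / ‖Ax‖₁`; it exists
because the ℓ₁ unit sphere of the column space of `A` is compact. By the triangle inequality and
`‖Ax‖₁ ≤ 2‖Mx‖₁`, every signed block sum `v` has `σ^M(v) ≤ 2 ∑_{j ∈ B} σ j`, so the upper bound
can only fail on a heavy block, `∑_{j ∈ B \ {i}} σ j > 10 (α/n) 𝔖₁(A)`. Every `j ≠ i` lies in a
fraction `(α-1)/(n-1) ≤ α/n` of the blocks, so by Markov at most a tenth of the blocks are heavy.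
The lower bound holds as soon as `|∑_{j ∈ B} ε_j ⟨a_j, y⟩| ≥ |⟨a_i, y⟩|` for one of the sign vectors
`ε`: then `σ^M(∑ ε_j a_j) ≥ |⟨∑ ε_j a_j, y⟩| / ‖My‖₁ ≥ (2/3) σ i`. Flipping `ε_i` moves that sum by
`2|⟨a_i, y⟩|`, so each sign vector fails with probability at most `1/2` and all hundred with
probability at most `2⁻¹⁰⁰ ≤ 1/16`. What is left has probability at least `1 - 1/10 - 1/16 ≥ 4/5`.
-/

lemma abs_apply_le_sum_abs {ι : Type*} [Fintype ι] (v : ι → ℝ) (j : ι) : |v j| ≤ ∑ l, |v l| :=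
  Finset.single_le_sum (f := fun l => |v l|) (fun _ _ => abs_nonneg _) (Finset.mem_univ j)

lemma sum_abs_pos_of_ne_zero {ι : Type*} [Fintype ι] {v : ι → ℝ} (hv : v ≠ 0) :
    0 < ∑ l, |v l| :=
  let ⟨j, hj⟩ := Function.ne_iff.mp hv
  (abs_pos.mpr hj).trans_le (abs_apply_le_sum_abs v j)

lemma isCompact_inter_sum_abs_eq_one {ι : Type*} [Fintype ι] (W : Submodule ℝ (ι → ℝ)) :
    IsCompact ((W : Set (ι → ℝ)) ∩ {v | ∑ l, |v l| = 1}) := by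
  refine Metric.isCompact_of_isClosed_isBounded
    (W.closed_of_finiteDimensional.inter (isClosed_eq (by fun_prop) (by fun_prop)))
    ((Metric.isBounded_closedBall (x := 0) (r := 1)).subset fun v hv => ?_)
  rw [mem_closedBall_zero_iff, pi_norm_le_iff_of_nonneg zero_le_one]
  exact fun l => (abs_apply_le_sum_abs v l).trans_eq hv.2

section Sensitivity

variable {m d : ℕ} {B : Matrix (Fin m) (Fin d) ℝ} {a : Fin d → ℝ}

lemma sens_one_eq_sSup (B : Matrix (Fin m) (Fin d) ℝ) (a : Fin d → ℝ) :
    sens 1 B a = sSup {r : ℝ | ∃ x, B *ᵥ x ≠ 0 ∧ r = |a ⬝ᵥ x| / ∑ j, |(B *ᵥ x) j|} := by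
  simp only [sens, Real.rpow_one]

lemma sens_one_nonneg (B : Matrix (Fin m) (Fin d) ℝ) (a : Fin d → ℝ) : 0 ≤ sens 1 B a := by
  rw [sens_one_eq_sSup]
  exact Real.sSup_nonneg fun r ⟨x, _, hr⟩ => hr ▸ by positivity

lemma sens_one_le {C : ℝ} (hC : 0 ≤ C) (h : ∀ x, |a ⬝ᵥ x| ≤ C * ∑ j, |(B *ᵥ x) j|) :
    sens 1 B a ≤ C := by
  rw [sens_one_eq_sSup]
  refine Real.sSup_le (fun r ⟨x, hx, hr⟩ => ?_) hC
  rw [hr, div_le_iff₀ (sum_abs_pos_of_ne_zero hx)]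
  exact h x

lemma abs_dotProduct_div_le_sens_one {C : ℝ} (h : ∀ x, |a ⬝ᵥ x| ≤ C * ∑ j, |(B *ᵥ x) j|)
    (x : Fin d → ℝ) : |a ⬝ᵥ x| / ∑ j, |(B *ᵥ x) j| ≤ sens 1 B a := by
  by_cases hx : B *ᵥ x = 0
  · simpa [hx] using sens_one_nonneg B a
  rw [sens_one_eq_sSup]
  refine le_csSup ⟨C, fun r ⟨x, hx, hr⟩ => ?_⟩ ⟨x, hx, rfl⟩
  rw [hr, div_le_iff₀ (sum_abs_pos_of_ne_zero hx)]
  exact h x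

lemma abs_dotProduct_le_sens_one_mul {C : ℝ} (h : ∀ x, |a ⬝ᵥ x| ≤ C * ∑ j, |(B *ᵥ x) j|)
    (x : Fin d → ℝ) : |a ⬝ᵥ x| ≤ sens 1 B a * ∑ j, |(B *ᵥ x) j| := by
  by_cases hx : B *ᵥ x = 0
  · simpa [hx] using h x
  exact (div_le_iff₀ (sum_abs_pos_of_ne_zero hx)).mp (abs_dotProduct_div_le_sens_one h x)

end Sensitivity

section Rows

variable {n d : ℕ} (A : Matrix (Fin n) (Fin d) ℝ)

lemma abs_row_dotProduct_le_sens_one_mul (j : Fin n) (x : Fin d → ℝ) :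
    |A j ⬝ᵥ x| ≤ sens 1 A (A j) * ∑ l, |(A *ᵥ x) l| :=
  abs_dotProduct_le_sens_one_mul (C := 1)
    (fun x => by rw [one_mul]; exact abs_apply_le_sum_abs (A *ᵥ x) j) x

-- If `A *ᵥ y = 0` the quotient is the junk value `0 / 0 = 0`; this is forced only when `A = 0`.
lemma exists_sens_one_row_le_div (i : Fin n) :
    ∃ y, sens 1 A (A i) ≤ |A i ⬝ᵥ y| / ∑ l, |(A *ᵥ y) l| := by
  set K : Set (Fin n → ℝ) := (LinearMap.range A.mulVecLin : Set (Fin n → ℝ)) ∩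
    {v | ∑ l, |v l| = 1}
  have hrow (x : Fin d → ℝ) : A i ⬝ᵥ x = (A *ᵥ x) i := rfl
  have hnormalize (x : Fin d → ℝ) (hx : A *ᵥ x ≠ 0) :
      (∑ l, |(A *ᵥ x) l|)⁻¹ • A *ᵥ x ∈ K := by
    refine ⟨⟨(∑ l, |(A *ᵥ x) l|)⁻¹ • x, by simp⟩, ?_⟩
    simp only [Set.mem_ofPred_eq, Pi.smul_apply, smul_eq_mul, abs_mul, ← Finset.mul_sum,
      abs_inv, abs_of_pos (sum_abs_pos_of_ne_zero hx)]
    exact inv_mul_cancel₀ (sum_abs_pos_of_ne_zero hx).ne'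
  by_cases hK : K.Nonempty
  · obtain ⟨v, ⟨⟨y, rfl⟩, hy1⟩, hmax⟩ := (isCompact_inter_sum_abs_eq_one _).exists_isMaxOn hK
      (continuous_apply i).abs.continuousOn
    refine ⟨y, ?_⟩
    rw [show ∑ l, |(A *ᵥ y) l| = 1 from hy1, div_one]
    refine sens_one_le (abs_nonneg _) fun x => ?_
    by_cases hx : A *ᵥ x = 0
    · simp [hrow, hx]
    have hle := hmax (hnormalize x hx)
    simp only [Set.mem_ofPred_eq, Pi.smul_apply, smul_eq_mul, abs_mul, abs_inv,
      abs_of_pos (sum_abs_pos_of_ne_zero hx)] at hle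
    rw [inv_mul_le_iff₀ (sum_abs_pos_of_ne_zero hx)] at hle
    simpa [hrow, mul_comm] using hle
  · refine ⟨0, ?_⟩
    simp only [dotProduct_zero, abs_zero, zero_div]
    refine sens_one_le le_rfl fun x => ?_
    by_cases hx : A *ᵥ x = 0
    · simp [hrow, hx]
    exact absurd ⟨_, hnormalize x hx⟩ hK

end Rows

def boolSign (b : Bool) : ℝ := if b then 1 else -1

@[simp] lemma abs_boolSign (b : Bool) : |boolSign b| = 1 := by cases b <;> simp [boolSign]

@[simp] lemma boolSign_not (b : Bool) : boolSign (!b) = -boolSign b := by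
  cases b <;> simp [boolSign]

lemma sum_boolSign_smul_dotProduct {ι : Type*} {d : ℕ} (A : Matrix ι (Fin d) ℝ) (S : Finset ι)
    (ε : ι → Bool) (x : Fin d → ℝ) :
    (∑ j ∈ S, boolSign (ε j) • A j) ⬝ᵥ x = ∑ j ∈ S, boolSign (ε j) * (A j ⬝ᵥ x) := by
  simp only [sum_dotProduct, smul_dotProduct, smul_eq_mul]

section SignedSums

variable {n d m : ℕ} (A : Matrix (Fin n) (Fin d) ℝ) {M : Matrix (Fin m) (Fin d) ℝ}

lemma abs_signedSum_dotProduct_le {c : ℝ} (hAM : ∀ x, ∑ l, |(A *ᵥ x) l| ≤ c * ∑ l, |(M *ᵥ x) l|)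
    (S : Finset (Fin n)) (ε : Fin n → Bool) (x : Fin d → ℝ) :
    |(∑ j ∈ S, boolSign (ε j) • A j) ⬝ᵥ x| ≤
      (c * ∑ j ∈ S, sens 1 A (A j)) * ∑ l, |(M *ᵥ x) l| := by
  have hσ : 0 ≤ ∑ j ∈ S, sens 1 A (A j) := Finset.sum_nonneg fun j _ => sens_one_nonneg A (A j)
  calc _ ≤ ∑ j ∈ S, |A j ⬝ᵥ x| := by
        rw [sum_boolSign_smul_dotProduct]
        refine (Finset.abs_sum_le_sum_abs _ _).trans_eq (Finset.sum_congr rfl fun j _ => ?_)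
        rw [abs_mul, abs_boolSign, one_mul]
    _ ≤ ∑ j ∈ S, sens 1 A (A j) * ∑ l, |(A *ᵥ x) l| :=
        Finset.sum_le_sum fun j _ => abs_row_dotProduct_le_sens_one_mul A j x
    _ ≤ (∑ j ∈ S, sens 1 A (A j)) * (c * ∑ l, |(M *ᵥ x) l|) := by
        rw [← Finset.sum_mul]; gcongr; exact hAM x
    _ = _ := by ring

lemma sens_one_signedSum_le {c : ℝ} (hc : 0 ≤ c)
    (hAM : ∀ x, ∑ l, |(A *ᵥ x) l| ≤ c * ∑ l, |(M *ᵥ x) l|) (S : Finset (Fin n))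
    (ε : Fin n → Bool) :
    sens 1 M (∑ j ∈ S, boolSign (ε j) • A j) ≤ c * ∑ j ∈ S, sens 1 A (A j) :=
  sens_one_le (mul_nonneg hc (Finset.sum_nonneg fun j _ => sens_one_nonneg A (A j)))
    (abs_signedSum_dotProduct_le A hAM S ε)

end SignedSums

lemma sens_one_le_mul_sens_one_of_abs_dotProduct_le {n m d : ℕ} {A : Matrix (Fin n) (Fin d) ℝ}
    {M : Matrix (Fin m) (Fin d) ℝ} {a b y : Fin d → ℝ} {c C K : ℝ} (hC : 0 ≤ C)
    (hAM : ∀ x, ∑ l, |(A *ᵥ x) l| ≤ c * ∑ l, |(M *ᵥ x) l|)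
    (hMA : ∀ x, ∑ l, |(M *ᵥ x) l| ≤ C * ∑ l, |(A *ᵥ x) l|)
    (hb : ∀ x, |b ⬝ᵥ x| ≤ K * ∑ l, |(M *ᵥ x) l|)
    (hy : sens 1 A a ≤ |a ⬝ᵥ y| / ∑ l, |(A *ᵥ y) l|) (hab : |a ⬝ᵥ y| ≤ |b ⬝ᵥ y|) :
    sens 1 A a ≤ C * sens 1 M b := by
  have hCM : 0 ≤ C * sens 1 M b := mul_nonneg hC (sens_one_nonneg M b)
  rcases (Finset.sum_nonneg fun l _ => abs_nonneg ((A *ᵥ y) l)).eq_or_lt with hAy | hAy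
  · rw [← hAy, div_zero] at hy
    exact hy.trans hCM
  have hMy : 0 < ∑ l, |(M *ᵥ y) l| := by
    refine (Finset.sum_nonneg fun l _ => abs_nonneg _).lt_of_ne fun h => ?_
    have := hAM y
    rw [← h, mul_zero] at this
    linarith
  calc sens 1 A a ≤ |b ⬝ᵥ y| / ∑ l, |(A *ᵥ y) l| := hy.trans (by gcongr)
    _ ≤ C * (|b ⬝ᵥ y| / ∑ l, |(M *ᵥ y) l|) := by
      rw [mul_div_assoc', div_le_div_iff₀ hAy hMy]
      nlinarith [hMA y, abs_nonneg (b ⬝ᵥ y)]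
    _ ≤ C * sens 1 M b := by gcongr; exact abs_dotProduct_div_le_sens_one hb y

section Counting

open Finset

lemma two_mul_card_abs_sum_boolSign_lt_le {ι : Type*} [Fintype ι] [DecidableEq ι]
    {S : Finset ι} {i : ι} (hi : i ∈ S) (c : ι → ℝ) :
    2 * #{ε : ι → Bool | |∑ j ∈ S, boolSign (ε j) * c j| < |c i|} ≤ 2 ^ Fintype.card ι := by
  set s : (ι → Bool) → ℝ := fun ε => ∑ j ∈ S, boolSign (ε j) * c j
  change 2 * #{ε : ι → Bool | |s ε| < |c i|} ≤ _
  set flip : (ι → Bool) → (ι → Bool) := fun ε => Function.update ε i (!ε i)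
  have hflip : Function.Involutive flip := fun ε => by simp [flip]
  have hjump (ε : ι → Bool) : s (flip ε) - s ε = -2 * boolSign (ε i) * c i := by
    rw [← sum_sub_distrib, sum_eq_single_of_mem i hi fun j _ hj => by
      simp [flip, Function.update_of_ne hj]]
    simp only [flip, Function.update_self, boolSign_not]
    ring
  have hmaps : Set.MapsTo flip {ε | |s ε| < |c i|} {ε | ¬ |s ε| < |c i|} := fun ε hε hlt => by
    have := congrArg abs (hjump ε)
    simp only [abs_mul, abs_neg, abs_two, abs_boolSign, mul_one] at this
    linarith [abs_sub (s (flip ε)) (s ε), hε.out, hlt]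
  have hle := card_le_card_of_injOn flip (s := {ε | |s ε| < |c i|})
    (t := {ε | ¬ |s ε| < |c i|}) (by simpa [Set.MapsTo] using hmaps)
    hflip.injective.injOn
  have htot := card_filter_add_card_filter_not (s := univ) fun ε => |s ε| < |c i|
  simp only [card_univ, Fintype.card_fun, Fintype.card_bool] at htot
  omega

lemma card_filter_forall_apply {κ β : Type*} [Fintype κ] [DecidableEq κ] [Fintype β]
    (p : β → Prop) [DecidablePred p] [DecidablePred fun f : κ → β => ∀ k, p (f k)] :
    #{f : κ → β | ∀ k, p (f k)} = #{b | p b} ^ Fintype.card κ := by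
  trans #(Fintype.piFinset fun _ : κ => ({b | p b} : Finset β))
  · congr 1
    ext f
    simp [Fintype.mem_piFinset]
  · simp [Fintype.card_piFinset]

lemma two_pow_mul_card_forall_abs_sum_boolSign_lt_le {ι : Type*} [Fintype ι] [DecidableEq ι]
    {S : Finset ι} {i : ι} (hi : i ∈ S) (c : ι → ℝ) (K : ℕ) :
    2 ^ K * #{e : Fin K → ι → Bool | ∀ k, |∑ j ∈ S, boolSign (e k j) * c j| < |c i|} ≤
      Fintype.card (Fin K → ι → Bool) := by
  rw [card_filter_forall_apply fun ε : ι → Bool => |∑ j ∈ S, boolSign (ε j) * c j| < |c i|,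
    Fintype.card_fin, ← mul_pow, Fintype.card_fun, Fintype.card_fun, Fintype.card_bool,
    Fintype.card_fin]
  exact Nat.pow_le_pow_left (two_mul_card_abs_sum_boolSign_lt_le hi c) K

lemma mul_card_filter_lt_le {β : Type*} (s : Finset β) {X : β → ℝ} (hX : ∀ b ∈ s, 0 ≤ X b)
    {u : ℝ} (hu : 0 ≤ u) (hsum : ∑ b ∈ s, X b ≤ u * #s) (c : ℕ) :
    c * #{b ∈ s | c * u < X b} ≤ #s := by
  set F := {b ∈ s | c * u < X b}
  rcases F.eq_empty_or_nonempty with hF | hF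
  · simp [hF]
  have hlt : u * (c * #F) < u * #s := calc
    u * (c * #F) = ∑ b ∈ F, c * u := by rw [sum_const, nsmul_eq_mul]; ring
    _ < ∑ b ∈ F, X b := sum_lt_sum_of_nonempty hF fun b hb => (mem_filter.mp hb).2
    _ ≤ ∑ b ∈ s, X b := sum_le_sum_of_subset_of_nonneg (filter_subset _ _) fun b hb _ => hX b hb
    _ ≤ u * #s := hsum
  exact_mod_cast (lt_of_mul_lt_mul_left hlt hu).le

variable {X Y : Type*} [Fintype X] [Fintype Y]

lemma mul_card_filter_prod_fst_le (p : X → Prop) [DecidablePred p] {c : ℕ}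
    (h : c * #{x | p x} ≤ Fintype.card X) : c * #{ω : X × Y | p ω.1} ≤ Fintype.card (X × Y) := by
  rw [← univ_product_univ, filter_product_left, card_product, card_univ, ← mul_assoc,
    Fintype.card_prod]
  exact Nat.mul_le_mul_right _ h

lemma mul_card_filter_prod_le (P : X → Y → Prop) [∀ x, DecidablePred (P x)] {c : ℕ}
    (h : ∀ x, c * #{y | P x y} ≤ Fintype.card Y) :
    c * #{ω : X × Y | P ω.1 ω.2} ≤ Fintype.card (X × Y) := by
  have hfiber : #{ω : X × Y | P ω.1 ω.2} = ∑ x, #{y | P x y} := by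
    simp only [card_filter, Fintype.sum_prod_type]
  rw [hfiber, mul_sum, Fintype.card_prod, ← card_univ, ← smul_eq_mul, ← sum_const]
  exact sum_le_sum fun x _ => h x

lemma four_mul_card_le_five_mul_card_filter {Ω : Type*} [Fintype Ω] {P Q R : Ω → Prop}
    [DecidablePred P] [DecidablePred Q] [DecidablePred R]
    (hP : 10 * #{ω | P ω} ≤ Fintype.card Ω) (hQ : 16 * #{ω | Q ω} ≤ Fintype.card Ω)
    (hR : ∀ ω, ¬P ω → ¬Q ω → R ω) : 4 * Fintype.card Ω ≤ 5 * #{ω | R ω} := by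
  have hcover : (univ : Finset Ω) ⊆
      ({ω | P ω} : Finset Ω) ∪ ({ω | Q ω} : Finset Ω) ∪ ({ω | R ω} : Finset Ω) := fun ω _ => by
    by_cases hp : P ω <;> by_cases hq : Q ω <;> simp [hp, hq, hR ω]
  have := (card_le_card hcover).trans (card_union_le _ _)
  have := card_union_le ({ω | P ω} : Finset Ω) ({ω | Q ω} : Finset Ω)
  rw [card_univ] at *
  omega

end Counting

abbrev Block (ι : Type*) [DecidableEq ι] (k : ℕ) (i : ι) : Type _ :=
  {S : Finset ι // S.card = k ∧ i ∈ S}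

section Blocks

open Finset

variable {ι : Type*} [Fintype ι] [DecidableEq ι]

lemma card_filter_card_eq_and_subset (T : Finset ι) {k : ℕ} (hk : #T ≤ k) :
    #{S : Finset ι | #S = k ∧ T ⊆ S} = (Fintype.card ι - #T).choose (k - #T) := by
  rw [← card_compl, ← card_powersetCard]
  refine card_bij' (fun S _ => S \ T) (fun U _ => U ∪ T) (fun S hS => ?_) (fun U hU => ?_)
    (fun S hS => ?_) (fun U hU => ?_)
  · simp only [mem_filter, mem_univ, true_and] at hS
    rw [mem_powersetCard, card_sdiff_of_subset hS.2, hS.1]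
    exact ⟨fun x hx => mem_compl.mpr (mem_sdiff.mp hx).2, rfl⟩
  · rw [mem_powersetCard, subset_compl_iff_disjoint_right] at hU
    simp only [mem_filter, mem_univ, true_and]
    exact ⟨by rw [card_union_of_disjoint hU.1, hU.2]; omega, subset_union_right⟩
  · simp only [mem_filter, mem_univ, true_and] at hS
    exact sdiff_union_of_subset hS.2
  · rw [mem_powersetCard, subset_compl_iff_disjoint_right] at hU
    exact union_sdiff_cancel_right hU.1

lemma card_block (i : ι) {k : ℕ} (hk : 1 ≤ k) :
    Fintype.card (Block ι k i) = (Fintype.card ι - 1).choose (k - 1) := by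
  rw [Fintype.card_subtype, ← card_singleton i, ← card_filter_card_eq_and_subset _ (by simpa)]
  simp only [singleton_subset_iff]

lemma mul_choose_sub_two_le {N k : ℕ} (hk : 2 ≤ k) (hkN : k ≤ N) :
    N * (N - 2).choose (k - 2) ≤ k * (N - 1).choose (k - 1) := by
  have hpascal := Nat.add_one_mul_choose_eq (N - 2) (k - 2)
  rw [show N - 2 + 1 = N - 1 by omega, show k - 2 + 1 = k - 1 by omega] at hpascal
  have hratio : N * (k - 1) ≤ k * (N - 1) := by
    zify [show 1 ≤ k by omega, show 1 ≤ N by omega]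
    nlinarith
  refine Nat.le_of_mul_le_mul_right (c := N - 1) ?_ (by omega)
  calc N * (N - 2).choose (k - 2) * (N - 1) = N * (k - 1) * (N - 1).choose (k - 1) := by
        rw [mul_assoc, mul_comm _ (N - 1), hpascal]; ring
    _ ≤ k * (N - 1) * (N - 1).choose (k - 1) := by gcongr
    _ = _ := by ring

lemma card_filter_block_mem_erase_le (i j : ι) {k : ℕ} (hk : 2 ≤ k) :
    #{S ∈ ({S | #S = k ∧ i ∈ S} : Finset (Finset ι)) | j ∈ S.erase i} ≤
      (Fintype.card ι - 2).choose (k - 2) := by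
  by_cases hj : j = i
  · simp [hj]
  have hij : #{i, j} = 2 := card_pair (Ne.symm hj)
  rw [show {S ∈ ({S | #S = k ∧ i ∈ S} : Finset (Finset ι)) | j ∈ S.erase i} =
      ({S | #S = k ∧ {i, j} ⊆ S} : Finset (Finset ι)) by
    ext S; simp only [mem_filter, mem_univ, true_and, mem_erase, insert_subset_iff,
      singleton_subset_iff]; tauto,
    card_filter_card_eq_and_subset _ (hij ▸ hk), hij]

lemma sum_sum_eq_sum_mul_card_filter {β : Type*} (F : Finset β) (g : β → Finset ι)
    (w : ι → ℝ) : ∑ b ∈ F, ∑ j ∈ g b, w j = ∑ j, w j * #{b ∈ F | j ∈ g b} := by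
  rw [sum_comm' (t' := univ) (s' := fun j => {b ∈ F | j ∈ g b}) (by simp)]
  simp [mul_comm]

lemma sum_block_sum_erase_le (i : ι) {k : ℕ} (hk : 2 ≤ k) (hkN : k ≤ Fintype.card ι)
    {w : ι → ℝ} (hw : ∀ j, 0 ≤ w j) :
    ∑ b : Block ι k i, ∑ j ∈ b.1.erase i, w j ≤
      k / Fintype.card ι * (∑ j, w j) * Fintype.card (Block ι k i) := by
  set N := Fintype.card ι
  have hratio : ((N - 2).choose (k - 2) : ℝ) ≤ k / N * (N - 1).choose (k - 1) := by
    rw [div_mul_eq_mul_div, le_div_iff₀ (by exact_mod_cast (show 0 < N by omega))]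
    exact_mod_cast (mul_comm _ _).trans_le (mul_choose_sub_two_le hk hkN)
  rw [← sum_subtype {S | #S = k ∧ i ∈ S} (by simp) fun S => ∑ j ∈ S.erase i, w j,
    sum_sum_eq_sum_mul_card_filter, card_block i (by omega)]
  calc _ ≤ ∑ j, w j * (k / N * (N - 1).choose (k - 1)) := sum_le_sum fun j _ => by
        gcongr
        · exact hw j
        · exact (Nat.cast_le.mpr (card_filter_block_mem_erase_le i j hk)).trans hratio
    _ = _ := by rw [← sum_mul]; ring

lemma mul_card_heavy_block_le (i : ι) {k : ℕ} (hk : 2 ≤ k) (hkN : k ≤ Fintype.card ι)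
    {w : ι → ℝ} (hw : ∀ j, 0 ≤ w j) (c : ℕ) :
    c * #{b : Block ι k i | c * (k / Fintype.card ι * ∑ j, w j) < ∑ j ∈ b.1.erase i, w j} ≤
      Fintype.card (Block ι k i) := by
  simpa using mul_card_filter_lt_le univ (fun b _ => sum_nonneg fun j _ => hw j)
    (mul_nonneg (by positivity) (sum_nonneg fun j _ => hw j))
    (by simpa using sum_block_sum_erase_le i hk hkN hw) c

end Blocks

theorem block_hashing_estimates_l1_sensitivity_general
    {n d m : ℕ} (A : Matrix (Fin n) (Fin d) ℝ)
    (α : ℕ) (hα2 : 2 ≤ α) (hαn : α ≤ n)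
    (M : Matrix (Fin m) (Fin d) ℝ)
    (hM : ∀ x : Fin d → ℝ,
      (1 / 2) * ∑ j, |A.mulVec x j| ≤ ∑ j, |M.mulVec x j| ∧
        ∑ j, |M.mulVec x j| ≤ (3 / 2) * ∑ j, |A.mulVec x j|)
    (i : Fin n) :
    5 * (Finset.univ.filter
      (fun ω : {S : Finset (Fin n) // S.card = α ∧ i ∈ S} ×
          (Fin 100 → Fin n → Bool) =>
        (2 / 3) * sens 1 A (A i) ≤
            (⨆ k : Fin 100, sens 1 M
              (∑ j ∈ ω.1.1, (if ω.2 k j then (1 : ℝ) else -1) • A j)) ∧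
          (⨆ k : Fin 100, sens 1 M
              (∑ j ∈ ω.1.1, (if ω.2 k j then (1 : ℝ) else -1) • A j)) ≤
            2 * sens 1 A (A i) +
              20 * ((α : ℝ) / n) * ∑ j : Fin n, sens 1 A (A j))).card
      ≥ 4 * Fintype.card ({S : Finset (Fin n) // S.card = α ∧ i ∈ S} ×
          (Fin 100 → Fin n → Bool)) := by
  set σ : Fin n → ℝ := fun j => sens 1 A (A j)
  have hσ (j : Fin n) : 0 ≤ σ j := sens_one_nonneg A (A j)
  have hAM (x : Fin d → ℝ) : ∑ l, |(A *ᵥ x) l| ≤ 2 * ∑ l, |(M *ᵥ x) l| := by linarith [(hM x).1]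
  obtain ⟨y, hy⟩ := exists_sens_one_row_le_div A i
  let heavy (b : Block (Fin n) α i) : Prop := 10 * (α / n * ∑ j, σ j) < ∑ j ∈ b.1.erase i, σ j
  let unlucky (b : Block (Fin n) α i) (ε : Fin n → Bool) : Prop :=
    |∑ j ∈ b.1, boolSign (ε j) * (A j ⬝ᵥ y)| < |A i ⬝ᵥ y|
  refine four_mul_card_le_five_mul_card_filter (P := fun ω => heavy ω.1)
    (Q := fun ω => ∀ k, unlucky ω.1 (ω.2 k)) ?_ ?_ ?_
  · have hmarkov := mul_card_heavy_block_le i hα2 (by simpa using hαn) hσ 10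
    rw [Fintype.card_fin] at hmarkov
    exact mul_card_filter_prod_fst_le heavy hmarkov
  · refine mul_card_filter_prod_le (fun b (e : Fin 100 → Fin n → Bool) => ∀ k, unlucky b (e k))
      fun b => (Nat.mul_le_mul_right _ (by norm_num : 16 ≤ 2 ^ 100)).trans ?_
    exact two_pow_mul_card_forall_abs_sum_boolSign_lt_le b.2.2 (fun j => A j ⬝ᵥ y) 100
  · rintro ⟨b, e⟩ hlight hlucky
    obtain ⟨k, hk⟩ := not_forall.mp hlucky
    constructor
    · refine le_trans ?_ (le_ciSup (Set.finite_range _).bddAbove k)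
      have := sens_one_le_mul_sens_one_of_abs_dotProduct_le (by norm_num) hAM (fun x => (hM x).2)
        (abs_signedSum_dotProduct_le A hAM b.1 (e k)) hy
        (by rwa [sum_boolSign_smul_dotProduct, ← not_lt])
      show 2 / 3 * σ i ≤ sens 1 M (∑ j ∈ b.1, boolSign (e k j) • A j)
      linarith
    · refine ciSup_le fun k => (sens_one_signedSum_le A zero_le_two hAM b.1 (e k)).trans ?_
      rw [← Finset.add_sum_erase _ _ b.2.2]
      linarith [not_lt.mp hlight]

/-- **Correctness of one round of the block-hashing ℓ1-sensitivity estimator.**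
`M` plays the role of `SA`, a constant-factor ℓ1 subspace embedding of `A`.  A
uniformly random size-`α` block `B ∋ i` of rows is hashed via 100 i.i.d. uniform
random sign vectors; `σ̃` is the maximum sensitivity (w.r.t. `SA`) of the signed
row-combinations.  With probability at least `0.8` (over the uniform choice of the
block and the sign vectors), `(2/3)σ_1(a_i) ≤ σ̃ ≤ 2σ_1(a_i) + 20(α/n)𝔖_1(A)`. -/
theorem block_hashing_estimates_l1_sensitivity
    {n d m : ℕ} (A : Matrix (Fin n) (Fin d) ℝ)
    (hA : LinearIndependent ℝ Aᵀ)
    (α : ℕ) (hα2 : 2 ≤ α) (hαn : α ≤ n)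
    (M : Matrix (Fin m) (Fin d) ℝ)
    (hM : ∀ x : Fin d → ℝ,
      (1 / 2) * ∑ j, |A.mulVec x j| ≤ ∑ j, |M.mulVec x j| ∧
        ∑ j, |M.mulVec x j| ≤ (3 / 2) * ∑ j, |A.mulVec x j|)
    (i : Fin n) :
    5 * (Finset.univ.filter
      (fun ω : {S : Finset (Fin n) // S.card = α ∧ i ∈ S} ×
          (Fin 100 → Fin n → Bool) =>
        (2 / 3) * sens 1 A (A i) ≤
            (⨆ k : Fin 100, sens 1 M
              (∑ j ∈ ω.1.1, (if ω.2 k j then (1 : ℝ) else -1) • A j)) ∧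
          (⨆ k : Fin 100, sens 1 M
              (∑ j ∈ ω.1.1, (if ω.2 k j then (1 : ℝ) else -1) • A j)) ≤
            2 * sens 1 A (A i) +
              20 * ((α : ℝ) / n) * ∑ j : Fin n, sens 1 A (A j))).card
      ≥ 4 * Fintype.card ({S : Finset (Fin n) // S.card = α ∧ i ∈ S} ×
          (Fin 100 → Fin n → Bool)) :=
  block_hashing_estimates_l1_sensitivity_general A α hα2 hαn M hM i
end

section
/- Let A ∈ ℝ^{n×d}, b ∈ ℝ^n, λ > 0, and p ≥ 1. Let A′ ∈ ℝ^{(n+1)×(d+1)} be the block matrix whose first n rows are [A, −b] and whose last row is a′ := (0,…,0,−λ). Then the ℓp sensitivity of the last row of A′ with respect to A′ satisfies σ_p^{A′}(a′) = λ^p / (λ^p + inf_{y∈ℝ^d} ‖Ay − b‖_p^p). Equivalently, inf_{y∈ℝ^d} ‖Ay − b‖_p^p = λ^p / σ_p^{A′}(a′) − λ^p. -/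
open Matrix BigOperators

/-- The augmented matrix `A' ∈ ℝ^{(n+1)×(d+1)}` whose first `n` rows are `[A, -b]`
and whose last row is `(0,…,0,-λ)`. -/
noncomputable def augmented {n d : ℕ} (A : Matrix (Fin n) (Fin d) ℝ)
    (b : Fin n → ℝ) (lam : ℝ) : Matrix (Fin (n + 1)) (Fin (d + 1)) ℝ :=
  Matrix.of (Fin.snoc (fun i => Fin.snoc (A i) (-(b i)))
    (Fin.snoc (0 : Fin d → ℝ) (-lam)))

/-!
Write a vector of `ℝ^{d+1}` as `x = (y, t)`. Then `A'x = (Ay - t b, -λ t)` and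
`⟨a', x⟩ = -λ t`, so for `t ≠ 0` homogeneity of `|·|^p` turns the sensitivity ratio at `x`
into `λ^p / (λ^p + ‖A (y / t) - b‖_p^p)`, while for `t = 0` the ratio vanishes. Hence the
sensitivity is the supremum of `r ↦ λ^p / (λ^p + r)` over the achievable regression costs `r`;
this map is antitone and continuous, so the supremum is its value at the infimum of the costs.
-/

lemma isLUB_image_div_add_of_isGLB {T : Set ℝ} {L R : ℝ} (hL : 0 < L) (hR : -L < R)
    (hT : IsGLB T R) (hne : T.Nonempty) :
    IsLUB ((fun r => L / (L + r)) '' T) (L / (L + R)) := by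
  have hpos : ∀ r ∈ T, 0 < L + r := fun r hr => by linarith [hT.1 hr]
  refine hT.isLUB_of_tendsto (fun r hr s _ hrs => ?_) hne ?_
  · exact div_le_div_of_nonneg_left hL.le (hpos r hr) (by linarith)
  · have hcont : ContinuousAt (fun r => L / (L + r)) R :=
      continuousAt_const.div (continuousAt_const.add continuousAt_id) (by linarith)
    exact hcont.tendsto.mono_left nhdsWithin_le_nhds

lemma sum_abs_smul_rpow {ι : Type*} [Fintype ι] (c : ℝ) (w : ι → ℝ) (p : ℝ) :
    ∑ i, |(c • w) i| ^ p = |c| ^ p * ∑ i, |w i| ^ p := by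
  simp only [Finset.mul_sum, Pi.smul_apply, smul_eq_mul, abs_mul,
    Real.mul_rpow (abs_nonneg _) (abs_nonneg _)]

lemma sum_abs_snoc_rpow {n : ℕ} (v : Fin n → ℝ) (c p : ℝ) :
    ∑ i, |(Fin.snoc v c : Fin (n + 1) → ℝ) i| ^ p = ∑ i, |v i| ^ p + |c| ^ p := by
  simp [Fin.sum_univ_castSucc]

lemma snoc_zero_dotProduct_snoc {d : ℕ} (c t : ℝ) (y : Fin d → ℝ) :
    (Fin.snoc (0 : Fin d → ℝ) c : Fin (d + 1) → ℝ) ⬝ᵥ Fin.snoc y t = c * t := by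
  simp [dotProduct, Fin.sum_univ_castSucc]

section Augmented

variable {n d : ℕ} (A : Matrix (Fin n) (Fin d) ℝ) (b : Fin n → ℝ)

lemma augmented_mulVec_snoc (lam t : ℝ) (y : Fin d → ℝ) :
    augmented A b lam *ᵥ Fin.snoc y t = Fin.snoc (A *ᵥ y - t • b) (-lam * t) := by
  ext i
  refine Fin.lastCases ?_ (fun i => ?_) i
  · simp [augmented, mulVec, snoc_zero_dotProduct_snoc]
  · simp [augmented, mulVec, dotProduct, Fin.sum_univ_castSucc, mul_comm]
    ring

lemma augmented_mulVec_snoc_eq_smul (lam : ℝ) {t : ℝ} (ht : t ≠ 0) (y : Fin d → ℝ) :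
    augmented A b lam *ᵥ Fin.snoc y t = t • Fin.snoc (A *ᵥ (t⁻¹ • y) - b) (-lam) := by
  rw [augmented_mulVec_snoc]
  ext i
  refine Fin.lastCases ?_ (fun i => ?_) i
  · simp [mul_comm]
  · simp [mulVec_smul, mul_sub, ht]

lemma abs_dotProduct_rpow_div_augmented_snoc {lam : ℝ} (hlam : 0 < lam) (p : ℝ) {t : ℝ}
    (ht : t ≠ 0) (y : Fin d → ℝ) :
    |Fin.snoc (0 : Fin d → ℝ) (-lam) ⬝ᵥ Fin.snoc y t| ^ p /
        ∑ i, |(augmented A b lam *ᵥ Fin.snoc y t) i| ^ p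
      = lam ^ p / (lam ^ p + ∑ i, |(A *ᵥ (t⁻¹ • y)) i - b i| ^ p) := by
  have htp : 0 < |t| ^ p := Real.rpow_pos_of_pos (abs_pos.mpr ht) p
  rw [augmented_mulVec_snoc_eq_smul A b lam ht, sum_abs_smul_rpow, sum_abs_snoc_rpow,
    snoc_zero_dotProduct_snoc, abs_mul, Real.mul_rpow (abs_nonneg _) (abs_nonneg _),
    abs_neg, abs_of_pos hlam, add_comm, mul_comm, mul_div_mul_left _ _ htp.ne']
  rfl

lemma abs_dotProduct_rpow_div_augmented_snoc_le
    {lam p R : ℝ} (hlam : 0 < lam) (hp : p ≠ 0) (hRL : -lam ^ p < R)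
    (hR : ∀ y, R ≤ ∑ i, |(A *ᵥ y) i - b i| ^ p) (y : Fin d → ℝ) (t : ℝ) :
    |Fin.snoc (0 : Fin d → ℝ) (-lam) ⬝ᵥ Fin.snoc y t| ^ p /
        ∑ i, |(augmented A b lam *ᵥ Fin.snoc y t) i| ^ p ≤ lam ^ p / (lam ^ p + R) := by
  have hL : 0 < lam ^ p := Real.rpow_pos_of_pos hlam p
  rcases eq_or_ne t 0 with rfl | ht
  · rw [snoc_zero_dotProduct_snoc, mul_zero, abs_zero, Real.zero_rpow hp, zero_div]
    exact div_nonneg hL.le (by linarith)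
  · rw [abs_dotProduct_rpow_div_augmented_snoc A b hlam p ht]
    exact div_le_div_of_nonneg_left hL.le (by linarith) (by linarith [hR (t⁻¹ • y)])

end Augmented

/-- **ℓp regression reduces to ℓp sensitivities:** the sensitivity of the last row
`a' = (0,…,0,-λ)` of the augmented matrix `A' = [A, -b; 0, -λ]` equals
`λ^p / (λ^p + inf_y ‖Ay - b‖_p^p)`; equivalently,
`inf_y ‖Ay - b‖_p^p = λ^p / σ_p^{A'}(a') - λ^p`. -/
theorem lp_regression_reduces_to_sensitivity
    {n d : ℕ} (A : Matrix (Fin n) (Fin d) ℝ) (b : Fin n → ℝ)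
    (lam : ℝ) (hlam : 0 < lam) (p : ℝ) (hp : 1 ≤ p) :
    sens p (augmented A b lam) (Fin.snoc (0 : Fin d → ℝ) (-lam))
        = lam ^ p / (lam ^ p +
          sInf {r : ℝ | ∃ y : Fin d → ℝ, r = ∑ i, |A.mulVec y i - b i| ^ p}) ∧
      sInf {r : ℝ | ∃ y : Fin d → ℝ, r = ∑ i, |A.mulVec y i - b i| ^ p}
        = lam ^ p / sens p (augmented A b lam) (Fin.snoc (0 : Fin d → ℝ) (-lam))
          - lam ^ p := by
  set T := {r : ℝ | ∃ y : Fin d → ℝ, r = ∑ i, |A.mulVec y i - b i| ^ p}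
  set L := lam ^ p
  have hL : 0 < L := Real.rpow_pos_of_pos hlam p
  have hT0 : 0 ∈ lowerBounds T := by
    rintro r ⟨y, rfl⟩
    positivity
  have hTne : T.Nonempty := ⟨_, 0, rfl⟩
  have hTglb : IsGLB T (sInf T) := isGLB_csInf hTne ⟨0, hT0⟩
  have hR : 0 ≤ sInf T := hTglb.2 hT0
  have hlub := isLUB_image_div_add_of_isGLB hL (by linarith) hTglb hTne
  set S := {r : ℝ | ∃ x, augmented A b lam *ᵥ x ≠ 0 ∧
    r = |Fin.snoc (0 : Fin d → ℝ) (-lam) ⬝ᵥ x| ^ p /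
      ∑ i, |(augmented A b lam *ᵥ x) i| ^ p}
  have hle : ∀ r ∈ S, r ≤ L / (L + sInf T) := by
    rintro _ ⟨x, -, rfl⟩
    rw [← Fin.snoc_init_self x]
    exact abs_dotProduct_rpow_div_augmented_snoc_le A b hlam (zero_lt_one.trans_le hp).ne'
      (by linarith) (fun y => hTglb.1 ⟨y, rfl⟩) _ _
  have hsub : (fun r => L / (L + r)) '' T ⊆ S := by
    rintro _ ⟨_, ⟨y, rfl⟩, rfl⟩
    refine ⟨Fin.snoc y 1, fun h => ?_, ?_⟩
    · have hlast := congrFun h (Fin.last n)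
      simp [augmented_mulVec_snoc, hlam.ne'] at hlast
    · simpa using (abs_dotProduct_rpow_div_augmented_snoc A b hlam p one_ne_zero y).symm
  have hsens :
      sens p (augmented A b lam) (Fin.snoc (0 : Fin d → ℝ) (-lam)) = L / (L + sInf T) :=
    IsLUB.csSup_eq ⟨hle, fun u hu => hlub.2 fun z hz => hu (hsub hz)⟩ ((hTne.image _).mono hsub)
  refine ⟨hsens, ?_⟩
  rw [hsens, div_div_cancel₀ hL.ne']
  ring
end

section
/- Let A ∈ ℝ^{n×d} have full column rank with rows a_1,…,a_n, let p ≥ 1, and let M ∈ ℝ^{m'×d} satisfy (1/2)‖Ax‖_p^p ≤ ‖Mx‖_p^p ≤ 2‖Ax‖_p^p for all x ∈ ℝ^d. Let w ∈ ℝ^n with w_i > 0, Σ_{i=1}^n w_i = d, and σ_p^M(a_i) ≤ 2 d^{max(0,p/2−1)} w_i for all i; set v_i := w_i/d and let S_M := Σ_{i=1}^n σ_p^M(a_i). Let γ ∈ (0,1), let I_1,…,I_m be i.i.d. random indices with P(I_j = i) = v_i, and let X := (1/m) Σ_{j=1}^m σ_p^M(a_{I_j}) / v_{I_j}. If m ≥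 800 d^{max(1,p/2)} / (γ² S_M), then with probability at least 0.99, (1−γ) S_M ≤ X ≤ (1+γ) S_M; in particular (1/2)(1−γ) 𝔖_p(A) ≤ X ≤ 2(1+γ) 𝔖_p(A). -/
open Matrix BigOperators
open scoped Classical

lemma sum_prod_apply {n m : ℕ} (u : Fin m → Fin n → ℝ) :
    ∑ J : Fin m → Fin n, ∏ j, u j (J j) = ∏ j, ∑ i, u j i :=
  (Fintype.prod_sum u).symm

lemma expect_one {n m : ℕ} (v : Fin n → ℝ) (hv : ∑ i, v i = 1) :
    ∑ J : Fin m → Fin n, ∏ j, v (J j) = 1 := by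
  rw [sum_prod_apply (fun _ i => v i)]
  simp [hv]

lemma expect_pair {n m : ℕ} (v g : Fin n → ℝ) (hv : ∑ i, v i = 1)
    (hg : ∑ i, v i * g i = 0) (j k : Fin m) :
    ∑ J : Fin m → Fin n, (∏ l, v (J l)) * (g (J j) * g (J k)) =
      if j = k then ∑ i, v i * g i ^ 2 else 0 := by
  have key : ∀ J : Fin m → Fin n,
      (∏ l, v (J l)) * (g (J j) * g (J k)) =
      ∏ l, (v (J l) * ((if l = j then g (J l) else 1) * (if l = k then g (J l) else 1))) := by
    intro J
    rw [Finset.prod_mul_distrib, Finset.prod_mul_distrib]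
    simp
  rw [Finset.sum_congr rfl (fun J _ => key J),
    sum_prod_apply (fun l i => v i * ((if l = j then g i else 1) * (if l = k then g i else 1)))]
  by_cases hjk : j = k
  · subst hjk
    have hc : ∀ l : Fin m, (∑ i, v i * ((if l = j then g i else 1) * (if l = j then g i else 1)))
        = if l = j then (∑ i, v i * g i ^ 2) else 1 := by
      intro l
      by_cases h : l = j <;> simp [h, hv, sq]
    rw [Finset.prod_congr rfl (fun l _ => hc l)]
    simp
  · rw [if_neg hjk]
    apply Finset.prod_eq_zero (Finset.mem_univ j)
    simp [hjk, hg]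

lemma expect_sq {n m : ℕ} (v g : Fin n → ℝ) (hv : ∑ i, v i = 1)
    (hg : ∑ i, v i * g i = 0) :
    ∑ J : Fin m → Fin n, (∏ l, v (J l)) * (∑ j, g (J j)) ^ 2 =
      m * ∑ i, v i * g i ^ 2 := by
  have h1 : ∀ J : Fin m → Fin n, (∏ l, v (J l)) * (∑ j, g (J j)) ^ 2
      = ∑ j, ∑ k, (∏ l, v (J l)) * (g (J j) * g (J k)) := by
    intro J
    rw [sq, Finset.sum_mul_sum, Finset.mul_sum]
    exact Finset.sum_congr rfl fun j _ => by rw [Finset.mul_sum]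
  rw [Finset.sum_congr rfl (fun J _ => h1 J), Finset.sum_comm]
  have h2 : ∀ j : Fin m, ∑ J : Fin m → Fin n, ∑ k, (∏ l, v (J l)) * (g (J j) * g (J k))
      = ∑ i, v i * g i ^ 2 := by
    intro j
    rw [Finset.sum_comm, Finset.sum_congr rfl (fun k _ => expect_pair v g hv hg j k)]
    simp
  rw [Finset.sum_congr rfl (fun j _ => h2 j)]
  simp [mul_comm]

lemma sampling_aux {n : ℕ} (m : ℕ) (v σ : Fin n → ℝ) (hv0 : ∀ i, 0 < v i)
    (hv1 : ∑ i, v i = 1) (hσ0 : ∀ i, 0 ≤ σ i)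
    (K : ℝ) (hfK : ∀ i, σ i / v i ≤ K)
    (γ : ℝ) (hγ0 : 0 < γ) (hS0 : 0 < ∑ i, σ i)
    (hm0 : 0 < m)
    (hmm : 400 * K ≤ γ ^ 2 * (∑ i, σ i) * m) :
    (0.99 : ℝ) ≤ ∑ J ∈ Finset.univ.filter (fun J : Fin m → Fin n =>
        (1 - γ) * (∑ i, σ i) ≤ (1 / m) * ∑ j, σ (J j) / v (J j) ∧
        (1 / m) * (∑ j, σ (J j) / v (J j)) ≤ (1 + γ) * (∑ i, σ i)),
      ∏ j, v (J j) := by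
  classical
  set S := ∑ i, σ i with hSdef
  set f : Fin n → ℝ := fun i => σ i / v i with hfdef
  set g : Fin n → ℝ := fun i => f i - S with hgdef
  have hm0' : (0:ℝ) < m := by exact_mod_cast hm0
  have hvf : ∀ i, v i * f i = σ i := fun i => by
    rw [mul_comm]; exact div_mul_cancel₀ (σ i) (ne_of_gt (hv0 i))
  have hSvf : ∑ i, v i * f i = S := by
    rw [Finset.sum_congr rfl fun i _ => hvf i]
  have hEg : ∑ i, v i * g i = 0 := by
    have e : ∀ i ∈ Finset.univ, v i * g i = v i * f i - S * v i := fun i _ => by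
      rw [hgdef]; ring
    rw [Finset.sum_congr rfl e, Finset.sum_sub_distrib, hSvf, ← Finset.mul_sum, hv1]
    ring
  have hf0 : ∀ i, 0 ≤ f i := fun i => div_nonneg (hσ0 i) (hv0 i).le
  -- variance bound
  have hid : ∑ i, v i * g i ^ 2 = (∑ i, v i * f i ^ 2) - S ^ 2 := by
    have e : ∀ i ∈ Finset.univ, v i * g i ^ 2
        = v i * f i ^ 2 - (2 * S) * (v i * f i) + S ^ 2 * v i := fun i _ => by
      rw [hgdef]; ring
    rw [Finset.sum_congr rfl e, Finset.sum_add_distrib, Finset.sum_sub_distrib,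
      ← Finset.mul_sum, ← Finset.mul_sum, hSvf, hv1]
    ring
  have hsf : ∑ i, v i * f i ^ 2 ≤ K * S := by
    have e : ∀ i ∈ Finset.univ, v i * f i ^ 2 ≤ σ i * K := by
      intro i _
      calc v i * f i ^ 2 = σ i * f i := by rw [← hvf i]; ring
        _ ≤ σ i * K := mul_le_mul_of_nonneg_left (hfK i) (hσ0 i)
    calc ∑ i, v i * f i ^ 2 ≤ ∑ i, σ i * K := Finset.sum_le_sum e
      _ = K * S := by rw [← Finset.sum_mul]; ring
  have hVar : ∑ i, v i * g i ^ 2 ≤ K * S := by nlinarith [sq_nonneg S]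
  have hVar0 : 0 ≤ ∑ i, v i * g i ^ 2 :=
    Finset.sum_nonneg fun i _ => mul_nonneg (hv0 i).le (sq_nonneg _)
  have hEsq := expect_sq (m := m) v g hv1 hEg
  have hP1 := expect_one (m := m) v hv1
  set t : ℝ := γ * S * m with htdef
  have ht0 : 0 < t := by positivity
  set bad : Finset (Fin m → Fin n) :=
    Finset.univ.filter (fun J => ¬ (∑ j, g (J j)) ^ 2 ≤ t ^ 2) with hbaddef
  set good : Finset (Fin m → Fin n) :=
    Finset.univ.filter (fun J => (∑ j, g (J j)) ^ 2 ≤ t ^ 2) with hgooddef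
  have hPnon : ∀ J : Fin m → Fin n, 0 ≤ ∏ j, v (J j) :=
    fun J => Finset.prod_nonneg fun j _ => (hv0 (J j)).le
  have hcheb : t ^ 2 * ∑ J ∈ bad, ∏ j, v (J j) ≤ m * (K * S) := by
    calc t ^ 2 * ∑ J ∈ bad, ∏ j, v (J j)
        = ∑ J ∈ bad, (∏ j, v (J j)) * t ^ 2 := by
          rw [Finset.mul_sum]; exact Finset.sum_congr rfl fun J _ => by ring
      _ ≤ ∑ J ∈ bad, (∏ j, v (J j)) * (∑ j, g (J j)) ^ 2 := by
          apply Finset.sum_le_sum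
          intro J hJ
          rw [hbaddef] at hJ
          have := (Finset.mem_filter.mp hJ).2
          exact mul_le_mul_of_nonneg_left (le_of_not_ge this) (hPnon J)
      _ ≤ ∑ J : Fin m → Fin n, (∏ j, v (J j)) * (∑ j, g (J j)) ^ 2 := by
          apply Finset.sum_le_sum_of_subset_of_nonneg (Finset.filter_subset _ _)
          intro J _ _
          exact mul_nonneg (hPnon J) (sq_nonneg _)
      _ = m * ∑ i, v i * g i ^ 2 := hEsq
      _ ≤ m * (K * S) := by
          exact mul_le_mul_of_nonneg_left hVar hm0'.le
  have hbadP : ∑ J ∈ bad, ∏ j, v (J j) ≤ 1 / 400 := by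
    have ht2 : (0:ℝ) < t ^ 2 := by positivity
    rw [← le_div_iff₀' ht2] at hcheb
    calc ∑ J ∈ bad, ∏ j, v (J j) ≤ m * (K * S) / t ^ 2 := hcheb
      _ ≤ 1 / 400 := by
          rw [div_le_div_iff₀ ht2 (by norm_num)]
          have ht2e : t ^ 2 = (γ ^ 2 * S * m) * (S * m) := by rw [htdef]; ring
          rw [ht2e]
          nlinarith [mul_le_mul_of_nonneg_right hmm (mul_nonneg hS0.le hm0'.le)]
  have hgoodP : (0.9975 : ℝ) ≤ ∑ J ∈ good, ∏ j, v (J j) := by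
    have hsplit := Finset.sum_filter_add_sum_filter_not Finset.univ
      (fun J : Fin m → Fin n => (∑ j, g (J j)) ^ 2 ≤ t ^ 2) (fun J => ∏ j, v (J j))
    rw [hP1] at hsplit
    have : ∑ J ∈ good, ∏ j, v (J j) = 1 - ∑ J ∈ bad, ∏ j, v (J j) := by
      rw [hgooddef, hbaddef]; linarith [hsplit]
    rw [this]; linarith
  -- good set is contained in the target event
  have hsub : good ⊆ Finset.univ.filter (fun J : Fin m → Fin n =>
      (1 - γ) * S ≤ (1 / m) * ∑ j, σ (J j) / v (J j) ∧
      (1 / m) * (∑ j, σ (J j) / v (J j)) ≤ (1 + γ) * S) := by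
    intro J hJ
    rw [hgooddef, Finset.mem_filter] at hJ
    have hDsq := hJ.2
    set D := ∑ j, g (J j) with hDdef
    obtain ⟨hD2, hD1⟩ := abs_le_of_sq_le_sq' hDsq ht0.le
    have hT : ∑ j, σ (J j) / v (J j) = D + m * S := by
      rw [hDdef, hgdef]
      rw [Finset.sum_sub_distrib, Finset.sum_const, Finset.card_univ, Fintype.card_fin,
        nsmul_eq_mul]
      ring
    rw [Finset.mem_filter]
    refine ⟨Finset.mem_univ J, ?_, ?_⟩
    · rw [hT]
      rw [div_mul_eq_mul_div, le_div_iff₀ hm0']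
      rw [htdef] at hD2
      linarith
    · rw [hT]
      rw [div_mul_eq_mul_div, div_le_iff₀ hm0']
      rw [htdef] at hD1
      linarith
  calc (0.99 : ℝ) ≤ (0.9975 : ℝ) := by norm_num
    _ ≤ ∑ J ∈ good, ∏ j, v (J j) := hgoodP
    _ ≤ _ := Finset.sum_le_sum_of_subset_of_nonneg hsub (fun J _ _ => hPnon J)

lemma rpow_sum_nonneg {k : ℕ} (p : ℝ) (y : Fin k → ℝ) : 0 ≤ ∑ j, |y j| ^ p :=
  Finset.sum_nonneg fun j _ => Real.rpow_nonneg (abs_nonneg _) p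

lemma rpow_sum_pos {k : ℕ} {p : ℝ} {y : Fin k → ℝ} (hy : y ≠ 0) :
    0 < ∑ j, |y j| ^ p := by
  obtain ⟨j, hj⟩ := Function.ne_iff.mp hy
  refine Finset.sum_pos' (fun i _ => Real.rpow_nonneg (abs_nonneg _) p) ⟨j, Finset.mem_univ j, ?_⟩
  exact Real.rpow_pos_of_pos (abs_pos.mpr hj) p

lemma rpow_sum_zero {k : ℕ} {p : ℝ} (hp : p ≠ 0) {y : Fin k → ℝ} (hy : y = 0) :
    ∑ j, |y j| ^ p = 0 := by
  subst hy; simp [Real.zero_rpow hp]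


/-- **Correctness of the Lewis-weight importance-sampling estimator for the total
ℓp sensitivity.**  `M` is a constant-factor ℓp subspace embedding of `A`, the
sampling probabilities are `v_i = w_i/d` for Lewis-weight-like weights `w`, and the
sensitivities w.r.t. `M` are bounded by `2 d^{max(0,p/2−1)} w_i`.  Drawing `m` i.i.d.
indices from `v` (probability of an outcome `J : Fin m → Fin n` is `Π_j v_{J j}`),
the estimator `X = (1/m) Σ_j σ_p^M(a_{I_j})/v_{I_j}` lies in
`[(1−γ)S_M, (1+γ)S_M] ⊆ [(1/2)(1−γ)𝔖_p(A), 2(1+γ)𝔖_p(A)]` with probability ≥ 0.99,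
provided `m ≥ 800 d^{max(1,p/2)}/(γ²S_M)`. -/
theorem total_sensitivity_importance_sampling_estimate
    {n d m' : ℕ} (A : Matrix (Fin n) (Fin d) ℝ)
    (hA : LinearIndependent ℝ Aᵀ)
    (p : ℝ) (hp : 1 ≤ p) (hd : 1 ≤ d)
    (M : Matrix (Fin m') (Fin d) ℝ)
    (hM : ∀ x : Fin d → ℝ,
      (1 / 2) * ∑ j, |A.mulVec x j| ^ p ≤ ∑ j, |M.mulVec x j| ^ p ∧
        ∑ j, |M.mulVec x j| ^ p ≤ 2 * ∑ j, |A.mulVec x j| ^ p)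
    (w : Fin n → ℝ) (hw : ∀ i, 0 < w i) (hwsum : ∑ i, w i = (d : ℝ))
    (hsw : ∀ i, sens p M (A i) ≤ 2 * (d : ℝ) ^ (max 0 (p / 2 - 1)) * w i)
    (γ : ℝ) (hγ0 : 0 < γ) (hγ1 : γ < 1)
    (m : ℕ)
    (hm : (m : ℝ) ≥ 800 * (d : ℝ) ^ (max 1 (p / 2)) /
        (γ ^ 2 * ∑ i : Fin n, sens p M (A i))) :
    (∑ J ∈ Finset.univ.filter (fun J : Fin m → Fin n =>
        (1 - γ) * (∑ i : Fin n, sens p M (A i)) ≤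
            (1 / m) * ∑ j : Fin m, sens p M (A (J j)) / (w (J j) / d) ∧
          (1 / m) * (∑ j : Fin m, sens p M (A (J j)) / (w (J j) / d)) ≤
            (1 + γ) * (∑ i : Fin n, sens p M (A i)) ∧
          (1 / 2) * (1 - γ) * (∑ i : Fin n, sens p A (A i)) ≤
            (1 / m) * ∑ j : Fin m, sens p M (A (J j)) / (w (J j) / d) ∧
          (1 / m) * (∑ j : Fin m, sens p M (A (J j)) / (w (J j) / d)) ≤
            2 * (1 + γ) * ∑ i : Fin n, sens p A (A i)),
        ∏ j : Fin m, (w (J j) / d))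
      ≥ 0.99 := by
  classical
  have hp0 : (0:ℝ) < p := lt_of_lt_of_le one_pos hp
  have hpne : p ≠ 0 := ne_of_gt hp0
  have hd0 : (0:ℝ) < (d:ℝ) := by exact_mod_cast Nat.lt_of_lt_of_le Nat.zero_lt_one hd
  -- injectivity facts
  have hmulVec_eq : ∀ x : Fin d → ℝ, (∑ i, x i • Aᵀ i) = A.mulVec x := by
    intro x; funext j
    simp [Matrix.mulVec, dotProduct, Matrix.transpose_apply, mul_comm,
      Finset.sum_apply]
  have hAne : ∀ x : Fin d → ℝ, x ≠ 0 → A.mulVec x ≠ 0 := by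
    intro x hx h
    exact hx (funext fun i =>
      Fintype.linearIndependent_iff.mp hA x (by rw [hmulVec_eq, h]) i)
  have hMne : ∀ x : Fin d → ℝ, x ≠ 0 → M.mulVec x ≠ 0 := by
    intro x hx h
    have h1 := (hM x).1
    rw [rpow_sum_zero hpne h] at h1
    have h2 : 0 < ∑ j, |A.mulVec x j| ^ p := rpow_sum_pos (hAne x hx)
    linarith
  -- a convenient nonzero vector
  set x₁ : Fin d → ℝ := fun _ => 1 with hx₁def
  have hx₁ : x₁ ≠ 0 := by
    intro h
    have := congrFun h ⟨0, hd⟩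
    simp [hx₁def] at this
  -- boundedness of the sens sets
  have hbddM : ∀ i : Fin n, ∀ r ∈ {r : ℝ | ∃ x : Fin d → ℝ, M.mulVec x ≠ 0 ∧
      r = |A i ⬝ᵥ x| ^ p / ∑ l, |M.mulVec x l| ^ p}, r ≤ 2 := by
    rintro i r ⟨x, hx, rfl⟩
    have hMp : 0 < ∑ l, |M.mulVec x l| ^ p := rpow_sum_pos hx
    rw [div_le_iff₀ hMp]
    have h1 : |A i ⬝ᵥ x| ^ p ≤ ∑ j, |A.mulVec x j| ^ p := by
      have := Finset.single_le_sum (f := fun j => |A.mulVec x j| ^ p)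
        (fun j _ => Real.rpow_nonneg (abs_nonneg _) p) (Finset.mem_univ i)
      simpa [Matrix.mulVec] using this
    have h2 := (hM x).1
    linarith
  have hbddA : ∀ i : Fin n, ∀ r ∈ {r : ℝ | ∃ x : Fin d → ℝ, A.mulVec x ≠ 0 ∧
      r = |A i ⬝ᵥ x| ^ p / ∑ l, |A.mulVec x l| ^ p}, r ≤ 2 := by
    rintro i r ⟨x, hx, rfl⟩
    have hAp : 0 < ∑ l, |A.mulVec x l| ^ p := rpow_sum_pos hx
    rw [div_le_iff₀ hAp]
    have h1 : |A i ⬝ᵥ x| ^ p ≤ ∑ j, |A.mulVec x j| ^ p := by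
      have := Finset.single_le_sum (f := fun j => |A.mulVec x j| ^ p)
        (fun j _ => Real.rpow_nonneg (abs_nonneg _) p) (Finset.mem_univ i)
      simpa [Matrix.mulVec] using this
    nlinarith
  have hgeM : ∀ (i : Fin n) (x : Fin d → ℝ), M.mulVec x ≠ 0 →
      |A i ⬝ᵥ x| ^ p / (∑ l, |M.mulVec x l| ^ p) ≤ sens p M (A i) :=
    fun i x hx => le_csSup ⟨2, hbddM i⟩ ⟨x, hx, rfl⟩
  have hgeA : ∀ (i : Fin n) (x : Fin d → ℝ), A.mulVec x ≠ 0 →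
      |A i ⬝ᵥ x| ^ p / (∑ l, |A.mulVec x l| ^ p) ≤ sens p A (A i) :=
    fun i x hx => le_csSup ⟨2, hbddA i⟩ ⟨x, hx, rfl⟩
  have hσ0 : ∀ i, 0 ≤ sens p M (A i) := by
    intro i
    refine le_trans ?_ (hgeM i x₁ (hMne x₁ hx₁))
    exact div_nonneg (Real.rpow_nonneg (abs_nonneg _) p) (rpow_sum_nonneg p _)
  have hτ0 : ∀ i, 0 ≤ sens p A (A i) := by
    intro i
    refine le_trans ?_ (hgeA i x₁ (hAne x₁ hx₁))
    exact div_nonneg (Real.rpow_nonneg (abs_nonneg _) p) (rpow_sum_nonneg p _)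
  -- comparisons between sens wrt A and wrt M
  have hτle : ∀ i, sens p A (A i) ≤ 2 * sens p M (A i) := by
    intro i
    refine csSup_le ⟨_, x₁, hAne x₁ hx₁, rfl⟩ ?_
    rintro r ⟨x, hx, rfl⟩
    have hAp : 0 < ∑ l, |A.mulVec x l| ^ p := rpow_sum_pos hx
    have hMx : M.mulVec x ≠ 0 := by
      intro h
      have h1 := (hM x).1
      rw [rpow_sum_zero hpne h] at h1
      linarith
    have hMp : 0 < ∑ l, |M.mulVec x l| ^ p := rpow_sum_pos hMx
    have hnum : 0 ≤ |A i ⬝ᵥ x| ^ p := Real.rpow_nonneg (abs_nonneg _) p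
    have step : |A i ⬝ᵥ x| ^ p / (∑ l, |A.mulVec x l| ^ p) ≤
        2 * (|A i ⬝ᵥ x| ^ p / (∑ l, |M.mulVec x l| ^ p)) := by
      rw [mul_div_assoc', div_le_div_iff₀ hAp hMp]
      nlinarith [(hM x).2]
    exact step.trans (mul_le_mul_of_nonneg_left (hgeM i x hMx) (by norm_num))
  have hσle : ∀ i, sens p M (A i) ≤ 2 * sens p A (A i) := by
    intro i
    refine csSup_le ⟨_, x₁, hMne x₁ hx₁, rfl⟩ ?_
    rintro r ⟨x, hx, rfl⟩
    have hMp : 0 < ∑ l, |M.mulVec x l| ^ p := rpow_sum_pos hx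
    have hAx : A.mulVec x ≠ 0 := by
      intro h
      have h2 := (hM x).2
      rw [rpow_sum_zero hpne h] at h2
      linarith
    have hAp : 0 < ∑ l, |A.mulVec x l| ^ p := rpow_sum_pos hAx
    have hnum : 0 ≤ |A i ⬝ᵥ x| ^ p := Real.rpow_nonneg (abs_nonneg _) p
    have step : |A i ⬝ᵥ x| ^ p / (∑ l, |M.mulVec x l| ^ p) ≤
        2 * (|A i ⬝ᵥ x| ^ p / (∑ l, |A.mulVec x l| ^ p)) := by
      rw [mul_div_assoc', div_le_div_iff₀ hMp hAp]
      nlinarith [(hM x).1]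
    exact step.trans (mul_le_mul_of_nonneg_left (hgeA i x hAx) (by norm_num))
  -- positivity of the total sensitivity
  have hS0 : 0 < ∑ i, sens p M (A i) := by
    have hcol : Aᵀ ⟨0, hd⟩ ≠ 0 := hA.ne_zero ⟨0, hd⟩
    obtain ⟨j, hj⟩ := Function.ne_iff.mp hcol
    have hj' : A j ⟨0, hd⟩ ≠ 0 := hj
    have hxne : A j ≠ 0 := by
      intro h
      exact hj' (by rw [h]; rfl)
    have hdot : 0 < A j ⬝ᵥ A j := by
      refine Finset.sum_pos' (fun i _ => mul_self_nonneg _) ⟨⟨0, hd⟩, Finset.mem_univ _, ?_⟩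
      exact mul_self_pos.mpr hj'
    have hnum : 0 < |A j ⬝ᵥ A j| ^ p :=
      Real.rpow_pos_of_pos (abs_pos.mpr (ne_of_gt hdot)) p
    have hMx := hMne (A j) hxne
    have hpos : 0 < sens p M (A j) :=
      lt_of_lt_of_le (div_pos hnum (rpow_sum_pos hMx)) (hgeM j (A j) hMx)
    exact Finset.sum_pos' (fun i _ => hσ0 i) ⟨j, Finset.mem_univ j, hpos⟩
  -- weights
  have hv0 : ∀ i : Fin n, 0 < w i / (d:ℝ) := fun i => div_pos (hw i) hd0
  have hv1 : ∑ i : Fin n, w i / (d:ℝ) = 1 := by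
    rw [← Finset.sum_div, hwsum, div_self (ne_of_gt hd0)]
  -- the exponent identity
  have hKsplit : (d:ℝ) ^ (max 1 (p/2)) = (d:ℝ) ^ (max 0 (p/2 - 1)) * d := by
    have hmax : max 0 (p/2 - 1) + 1 = max 1 (p/2) := by
      rw [← max_add_add_right]; norm_num
    rw [← hmax, Real.rpow_add hd0, Real.rpow_one]
  have hK'1 : 1 ≤ (d:ℝ) ^ (max 1 (p/2)) := by
    calc (1:ℝ) = (d:ℝ) ^ (0:ℝ) := (Real.rpow_zero _).symm
      _ ≤ (d:ℝ) ^ (max 1 (p/2)) := Real.rpow_le_rpow_of_exponent_le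
          (by exact_mod_cast hd) (le_trans zero_le_one (le_max_left _ _))
  have hfK : ∀ i, sens p M (A i) / (w i / (d:ℝ)) ≤ 2 * ((d:ℝ) ^ (max 1 (p/2))) := by
    intro i
    rw [div_le_iff₀ (hv0 i)]
    calc sens p M (A i) ≤ 2 * (d:ℝ) ^ (max 0 (p/2 - 1)) * w i := hsw i
      _ = 2 * ((d:ℝ) ^ (max 1 (p/2))) * (w i / (d:ℝ)) := by
          rw [hKsplit]; field_simp
  -- m is positive and large
  have hγS : 0 < γ ^ 2 * ∑ i, sens p M (A i) := by positivity
  have hm0' : (0:ℝ) < m := by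
    refine lt_of_lt_of_le ?_ hm
    apply div_pos ?_ hγS
    nlinarith [hK'1]
  have hm0 : 0 < m := by exact_mod_cast hm0'
  have hmm : 400 * (2 * ((d:ℝ) ^ (max 1 (p/2)))) ≤
      γ ^ 2 * (∑ i, sens p M (A i)) * m := by
    rw [ge_iff_le, div_le_iff₀ hγS] at hm
    calc (400:ℝ) * (2 * ((d:ℝ) ^ (max 1 (p/2)))) = 800 * (d:ℝ) ^ (max 1 (p/2)) := by ring
      _ ≤ m * (γ ^ 2 * ∑ i, sens p M (A i)) := hm
      _ = γ ^ 2 * (∑ i, sens p M (A i)) * m := by ring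
  -- apply the sampling lemma
  have haux := sampling_aux m (fun i => w i / (d:ℝ)) (fun i => sens p M (A i))
    hv0 hv1 hσ0 (2 * ((d:ℝ) ^ (max 1 (p/2)))) hfK γ hγ0 hS0 hm0 hmm
  -- the sums over τ
  have hτ2σ : ∑ i, sens p A (A i) ≤ 2 * ∑ i, sens p M (A i) := by
    rw [Finset.mul_sum]
    exact Finset.sum_le_sum fun i _ => hτle i
  have hσ2τ : ∑ i, sens p M (A i) ≤ 2 * ∑ i, sens p A (A i) := by
    rw [Finset.mul_sum]
    exact Finset.sum_le_sum fun i _ => hσle i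
  rw [ge_iff_le]
  refine le_trans haux ?_
  apply Finset.sum_le_sum_of_subset_of_nonneg
  · intro J hJ
    rw [Finset.mem_filter] at hJ ⊢
    obtain ⟨hJu, h1, h2⟩ := hJ
    have h1' : (1 - γ) * (∑ i : Fin n, sens p M (A i)) ≤
        (1 / (m:ℝ)) * ∑ j : Fin m, sens p M (A (J j)) / (w (J j) / (d:ℝ)) := h1
    have h2' : (1 / (m:ℝ)) * (∑ j : Fin m, sens p M (A (J j)) / (w (J j) / (d:ℝ))) ≤
        (1 + γ) * (∑ i : Fin n, sens p M (A i)) := h2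
    refine ⟨hJu, h1', h2', ?_, ?_⟩
    · nlinarith
    · nlinarith
  · intro J _ _
    exact Finset.prod_nonneg fun j _ => (hv0 (J j)).le
end

section
/- Let β ≥ 1 and d′ ≥ 1 be real numbers, and let (x_t)_{t≥0} be the sequence of reals defined by x_0 ≥ max(β², 2) and x_{t+1} = β√(d′ + x_t) for all t ≥ 0. Then for every integer t with t ≥ 1 + 2·log₂(log₂(2x_0)), one has x_t ≤ 7β(β + √d′). -/
set_option maxHeartbeats 800000


/-- **Convergence of the recursion controlling the depth of the total-sensitivity
estimation algorithm:** if `x_0 ≥ max(β², 2)` and `x_{t+1} = β√(d′ + x_t)` with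
`β ≥ 1` and `d′ ≥ 1`, then `x_t ≤ 7β(β + √d′)` for every
`t ≥ 1 + 2·log₂(log₂(2x_0))`. -/
theorem recursion_depth_bound
    (β d' : ℝ) (hβ : 1 ≤ β) (hd' : 1 ≤ d')
    (x : ℕ → ℝ) (hx0 : x 0 ≥ max (β ^ 2) 2)
    (hrec : ∀ t : ℕ, x (t + 1) = β * Real.sqrt (d' + x t)) :
    ∀ t : ℕ, (t : ℝ) ≥ 1 + 2 * Real.logb 2 (Real.logb 2 (2 * x 0)) →
      x t ≤ 7 * β * (β + Real.sqrt d') := by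
  intro t ht
  have hβ0 : (0:ℝ) < β := lt_of_lt_of_le one_pos hβ
  have hd'0 : (0:ℝ) < d' := lt_of_lt_of_le one_pos hd'
  set sd := Real.sqrt d' with hsddef
  have hsd1 : 1 ≤ sd := by
    rw [hsddef]
    exact Real.one_le_sqrt.mpr hd'
  have hsdsq : sd ^ 2 = d' := Real.sq_sqrt hd'0.le
  set M := 7 * β * (β + sd) with hMdef
  have hx02 : (2:ℝ) ≤ x 0 := le_trans (le_max_right _ _) hx0
  have hxpos : ∀ s, 0 < x s := by
    intro s
    induction s with
    | zero => linarith
    | succ n ih =>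
      rw [hrec]
      exact mul_pos hβ0 (Real.sqrt_pos.mpr (by linarith))
  have hMβ : 4 * β ^ 2 ≤ M := by nlinarith
  -- invariance of M
  have hinv : ∀ s, x s ≤ M → x (s + 1) ≤ M := by
    intro s hs
    rw [hrec]
    have h1 : Real.sqrt (d' + x s) ≤ 7 * (β + sd) := by
      rw [show (7:ℝ) * (β + sd) = Real.sqrt ((7 * (β + sd)) ^ 2) from
        (Real.sqrt_sq (by positivity)).symm]
      apply Real.sqrt_le_sqrt
      nlinarith
    calc β * Real.sqrt (d' + x s) ≤ β * (7 * (β + sd)) :=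
          mul_le_mul_of_nonneg_left h1 hβ0.le
      _ = M := by ring
  set a := x 0 / (2 * β ^ 2) with hadef
  have ha0 : 0 < a := by positivity
  have hx0a : x 0 = 2 * β ^ 2 * a := by
    rw [hadef]; field_simp
  -- the main decay estimate
  have claim : ∀ s : ℕ, x s ≤ max M (2 * β ^ 2 * a ^ ((1/2:ℝ) ^ s)) := by
    intro s
    induction s with
    | zero =>
      simp only [pow_zero, Real.rpow_one]
      exact le_max_of_le_right (le_of_eq hx0a)
    | succ n ih =>
      rcases le_or_gt (x n) M with hM | hM
      · exact le_max_of_le_left (hinv n hM)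
      · have hB : x n ≤ 2 * β ^ 2 * a ^ ((1/2:ℝ) ^ n) := by
          rcases max_cases M (2 * β ^ 2 * a ^ ((1/2:ℝ) ^ n)) with ⟨h, _⟩ | ⟨h, _⟩
          · rw [h] at ih; linarith
          · rw [h] at ih; exact ih
        rcases le_or_gt (x n) d' with hxd | hxd
        · -- small case: immediately below M
          apply le_max_of_le_left
          rw [hrec]
          have h1 : Real.sqrt (d' + x n) ≤ 2 * sd := by
            rw [show (2:ℝ) * sd = Real.sqrt ((2 * sd) ^ 2) from
              (Real.sqrt_sq (by positivity)).symm]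
            apply Real.sqrt_le_sqrt
            nlinarith
          calc β * Real.sqrt (d' + x n) ≤ β * (2 * sd) :=
                mul_le_mul_of_nonneg_left h1 hβ0.le
            _ ≤ M := by nlinarith
        · -- contraction case
          apply le_max_of_le_right
          have hexp : ((1/2:ℝ) ^ (n+1)) * 2 = (1/2:ℝ) ^ n := by
            rw [pow_succ]; ring
          have h3 : (2 * β ^ 2 * a ^ ((1/2:ℝ) ^ (n+1))) ^ 2
              = 4 * β ^ 4 * a ^ ((1/2:ℝ) ^ n) := by
            rw [mul_pow, ← Real.rpow_natCast (a ^ ((1/2:ℝ) ^ (n+1))) 2,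
              ← Real.rpow_mul ha0.le]
            push_cast
            rw [hexp]
            ring
          have key : (β * Real.sqrt (d' + x n)) ^ 2
              ≤ (2 * β ^ 2 * a ^ ((1/2:ℝ) ^ (n+1))) ^ 2 := by
            rw [mul_pow, Real.sq_sqrt (by nlinarith [hxpos n]), h3]
            nlinarith [hxpos n]
          have h4 := Real.sqrt_le_sqrt key
          rwa [Real.sqrt_sq (by positivity), Real.sqrt_sq (by positivity),
            ← hrec n] at h4
  -- now bound the rpow term at time t
  have haet : a ^ ((1/2:ℝ) ^ t) ≤ 2 := by
    have he0 : (0:ℝ) ≤ (1/2:ℝ) ^ t := by positivity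
    have he1 : ((1/2:ℝ)) ^ t ≤ 1 := pow_le_one₀ (by norm_num) (by norm_num)
    rcases le_or_gt a 1 with ha1 | ha1
    · calc a ^ ((1/2:ℝ) ^ t) ≤ 1 := Real.rpow_le_one ha0.le ha1 he0
        _ ≤ 2 := by norm_num
    · rcases le_or_gt a 2 with ha2 | ha2
      · calc a ^ ((1/2:ℝ) ^ t) ≤ a ^ (1:ℝ) :=
            Real.rpow_le_rpow_of_exponent_le ha1.le he1
          _ = a := Real.rpow_one a
          _ ≤ 2 := ha2
      · -- a > 2 : use the time bound
        have hlog2 : (0:ℝ) < Real.log 2 := Real.log_pos (by norm_num)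
        have hloga : 0 < Real.log a := Real.log_pos (by linarith)
        have hlb_a : 1 < Real.logb 2 a := by
          calc (1:ℝ) = Real.logb 2 2 := (Real.logb_self_eq_one (by norm_num)).symm
            _ < Real.logb 2 a := Real.logb_lt_logb (b := 2) one_lt_two (by norm_num) ha2
        have h2x0 : (4:ℝ) ≤ 2 * x 0 := by linarith
        have hlb_2x0 : (2:ℝ) ≤ Real.logb 2 (2 * x 0) := by
          have h4 : Real.logb 2 4 = 2 := by
            rw [show (4:ℝ) = 2 ^ (2:ℕ) by norm_num, Real.logb_pow,
              Real.logb_self_eq_one (by norm_num)]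
            norm_num
          calc (2:ℝ) = Real.logb 2 4 := h4.symm
            _ ≤ Real.logb 2 (2 * x 0) :=
              Real.logb_le_logb_of_le (b := 2) one_lt_two (by norm_num) h2x0
        have ha_le : a ≤ 2 * x 0 := by
          rw [hadef]
          rw [div_le_iff₀ (by positivity)]
          nlinarith [hxpos 0, mul_nonneg (hxpos 0).le (show (0:ℝ) ≤ 4 * β ^ 2 - 1 by nlinarith)]
        have hmono1 : Real.logb 2 a ≤ Real.logb 2 (2 * x 0) :=
          Real.logb_le_logb_of_le (b := 2) one_lt_two ha0 ha_le
        have hmono2 : Real.logb 2 (Real.logb 2 a)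
            ≤ Real.logb 2 (Real.logb 2 (2 * x 0)) :=
          Real.logb_le_logb_of_le (b := 2) one_lt_two (by linarith) hmono1
        have hL1 : (1:ℝ) ≤ Real.logb 2 (Real.logb 2 (2 * x 0)) := by
          calc (1:ℝ) = Real.logb 2 2 := (Real.logb_self_eq_one (by norm_num)).symm
            _ ≤ Real.logb 2 (Real.logb 2 (2 * x 0)) :=
              Real.logb_le_logb_of_le (b := 2) one_lt_two (by norm_num) hlb_2x0
        have htbig : Real.logb 2 (Real.logb 2 a) ≤ (t:ℝ) := by linarith
        -- hence 2^t ≥ logb 2 a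
        have h2t : Real.logb 2 a ≤ (2:ℝ) ^ t := by
          calc Real.logb 2 a = (2:ℝ) ^ (Real.logb 2 (Real.logb 2 a)) :=
                (Real.rpow_logb (by norm_num) (by norm_num) (by linarith)).symm
            _ ≤ (2:ℝ) ^ ((t:ℝ)) :=
                Real.rpow_le_rpow_of_exponent_le (by norm_num) htbig
            _ = (2:ℝ) ^ t := by rw [Real.rpow_natCast]
        have hexp_le : (1/2:ℝ) ^ t ≤ Real.log 2 / Real.log a := by
          rw [div_pow, one_pow, div_le_div_iff₀ (by positivity) hloga]
          have : Real.log a ≤ (2:ℝ) ^ t * Real.log 2 := by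
            have := h2t
            rw [Real.logb, div_le_iff₀ hlog2] at this
            linarith [this]
          linarith
        calc a ^ ((1/2:ℝ) ^ t) ≤ a ^ (Real.log 2 / Real.log a) :=
              Real.rpow_le_rpow_of_exponent_le ha1.le hexp_le
          _ = 2 := by
              rw [Real.rpow_def_of_pos ha0]
              rw [mul_div_cancel₀ _ (ne_of_gt hloga)]
              exact Real.exp_log (by norm_num)
  have hfin : 2 * β ^ 2 * a ^ ((1/2:ℝ) ^ t) ≤ M := by
    nlinarith [Real.rpow_nonneg ha0.le ((1/2:ℝ) ^ t)]
  exact le_trans (claim t) (max_le le_rfl hfin)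
end
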